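/- arXiv:2312.16601 — 15 statements merged into one kernel-verified Lean document; each statement's English description precedes it below -/
import Mathlib

section
/- Let T be a conformal Killing-Yano tensor on a metric Lie algebra (𝔤, ⟨·,·⟩) with associated 1-form θ and associated vector ξ. Then θ ∘ T = 0, or equivalently Tξ = 0. -/
/-!
Putting `x = y` and `z = Tx` in the CKY equation and evaluating the Levi-Civita terms with the
Koszul formula gives the identity `⟨[T²x, x], x⟩ = |x|² θ(Tx)`. Since `T²` is symmetric, `𝔤`
has a basis of eigenvectors of `T²`; on an eigenvector `v` the bracket `[T²v, v]` vanishes, so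
`θ(Tv) = 0`. Hence `θ ∘ T = 0`, and then `|Tξ|² = -θ(T²ξ) = 0`.
-/

section Defs

variable {g : Type*} [LieRing g] [LieAlgebra ℝ g]

/-- `B` is a (positive definite) inner product on the real Lie algebra `g`,
given as a bilinear form. -/
structure IsInnerProduct (B : g →ₗ[ℝ] g →ₗ[ℝ] ℝ) : Prop where
  symm : ∀ x y : g, B x y = B y x
  posdef : ∀ x : g, x ≠ 0 → 0 < B x x

/-- The Koszul formula characterizing the Levi-Civita connection of the metric Lie
algebra `(g, B)`: `2⟨∇ₓy, z⟩ = ⟨[x,y], z⟩ − ⟨[y,z], x⟩ + ⟨[z,x], y⟩`. -/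
def IsLeviCivita (B : g →ₗ[ℝ] g →ₗ[ℝ] ℝ) (D : g → g → g) : Prop :=
  ∀ x y z : g, 2 * B (D x y) z = B ⁅x, y⁆ z - B ⁅y, z⁆ x + B ⁅z, x⁆ y

/-- A skew-symmetric endomorphism with respect to `B`. -/
def IsSkewSymmetric (B : g →ₗ[ℝ] g →ₗ[ℝ] ℝ) (T : g →ₗ[ℝ] g) : Prop :=
  ∀ x y : g, B (T x) y = - B x (T y)

/-- The conformal Killing-Yano equation for an endomorphism `T` with associated 1-form `θ`:
`⟨(∇ₓT)y, z⟩ + ⟨(∇_yT)x, z⟩ = 2⟨x,y⟩θ(z) − ⟨y,z⟩θ(x) − ⟨x,z⟩θ(y)`,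
where `(∇ₓT)y = ∇ₓ(Ty) − T(∇ₓy)`. -/
def IsCKYWith (B : g →ₗ[ℝ] g →ₗ[ℝ] ℝ) (D : g → g → g) (T : g →ₗ[ℝ] g)
    (θ : g →ₗ[ℝ] ℝ) : Prop :=
  ∀ x y z : g,
    B (D x (T y) - T (D x y)) z + B (D y (T x) - T (D y x)) z =
      2 * B x y * θ z - B y z * θ x - B x z * θ y

/-- A Killing-Yano tensor is a CKY tensor with `θ = 0`. -/
def IsKY (B : g →ₗ[ℝ] g →ₗ[ℝ] ℝ) (D : g → g → g) (T : g →ₗ[ℝ] g) : Prop :=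
  IsCKYWith B D T 0

/-- A parallel tensor: `(∇ₓT)y = 0` for all `x, y`. -/
def IsParallelT (D : g → g → g) (T : g →ₗ[ℝ] g) : Prop :=
  ∀ x y : g, D x (T y) - T (D x y) = 0

/-- The orthogonal complement of a submodule with respect to the bilinear form `B`. -/
def orthComp (B : g →ₗ[ℝ] g →ₗ[ℝ] ℝ) (p : Submodule ℝ g) : Submodule ℝ g where
  carrier := {x : g | ∀ y ∈ p, B x y = 0}
  add_mem' := by
    intro a b ha hb y hy
    simp only [map_add, LinearMap.add_apply, ha y hy, hb y hy, add_zero]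
  zero_mem' := by
    intro y hy
    simp
  smul_mem' := by
    intro c a ha y hy
    simp only [map_smul, LinearMap.smul_apply, ha y hy, smul_eq_mul, mul_zero]

end Defs

section MetricLieAlgebra

variable {g : Type*} [LieRing g] [LieAlgebra ℝ g] {B : g →ₗ[ℝ] g →ₗ[ℝ] ℝ}

theorem IsInnerProduct.exists_basis_eigenvectors [FiniteDimensional ℝ g]
    (hB : IsInnerProduct B) (S : g →ₗ[ℝ] g) (hS : ∀ x y : g, B (S x) y = B x (S y)) :
    ∃ b : Module.Basis (Fin (Module.finrank ℝ g)) ℝ g, ∀ i, ∃ μ : ℝ, S (b i) = μ • b i := by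
  let core : InnerProductSpace.Core ℝ g :=
    { inner := fun x y => B x y
      conj_inner_symm := fun x y => by simp [hB.symm y x]
      re_inner_nonneg := fun x => by
        rcases eq_or_ne x 0 with rfl | hx
        · simp
        · exact (hB.posdef x hx).le
      add_left := fun x y z => by simp
      smul_left := fun x y r => by simp
      definite := fun x hx => by
        by_contra hx'
        exact (hB.posdef x hx').ne' hx }
  let : NormedAddCommGroup g := core.toNormedAddCommGroup
  let : InnerProductSpace ℝ g := InnerProductSpace.ofCore core.toCore
  have hSymm : S.IsSymmetric := hS
  exact ⟨(hSymm.eigenvectorBasis rfl).toBasis, fun i =>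
    ⟨hSymm.eigenvalues rfl i, by
      rw [OrthonormalBasis.coe_toBasis]
      exact (hSymm.hasEigenvector_eigenvectorBasis rfl i).apply_eq_smul⟩⟩

theorem IsLeviCivita.apply_apply_self {D : g → g → g} (hD : IsLeviCivita B D) (x y : g) :
    B (D x y) y = 0 := by
  have h := hD x y y
  rw [lie_self, ← lie_skew x y] at h
  simp only [map_zero, LinearMap.zero_apply, map_neg, LinearMap.neg_apply] at h
  linarith

theorem IsLeviCivita.self_apply {D : g → g → g} (hD : IsLeviCivita B D) (x z : g) :
    B (D x x) z = B ⁅z, x⁆ x := by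
  have h := hD x x z
  rw [lie_self, ← lie_skew x z] at h
  simp only [map_zero, LinearMap.zero_apply, map_neg, LinearMap.neg_apply] at h
  linarith

theorem IsSkewSymmetric.apply_self {T : g →ₗ[ℝ] g} (hT : IsSkewSymmetric B T)
    (hB : ∀ x y : g, B x y = B y x) (x : g) : B x (T x) = 0 := by
  linarith [hT x x, hB (T x) x]

theorem IsSkewSymmetric.comp_self {T : g →ₗ[ℝ] g} (hT : IsSkewSymmetric B T) (x y : g) :
    B (T (T x)) y = B x (T (T y)) := by
  rw [hT, hT, neg_neg]

theorem IsCKYWith.lie_comp_self_apply_self {D : g → g → g} {T : g →ₗ[ℝ] g} {θ : g →ₗ[ℝ] ℝ}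
    (hCKY : IsCKYWith B D T θ) (hB : ∀ x y : g, B x y = B y x) (hD : IsLeviCivita B D)
    (hT : IsSkewSymmetric B T) (x : g) :
    B ⁅T (T x), x⁆ x = B x x * θ (T x) := by
  have hcky := hCKY x x (T x)
  have hDTx : B (T (D x x)) (T x) = -B ⁅T (T x), x⁆ x := by
    rw [hT, hD.self_apply]
  simp only [map_sub, LinearMap.sub_apply, hD.apply_apply_self, hDTx, hT.apply_self hB] at hcky
  linarith

theorem IsCKYWith.theta_comp_eq_zero [FiniteDimensional ℝ g] {D : g → g → g} {T : g →ₗ[ℝ] g}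
    {θ : g →ₗ[ℝ] ℝ} (hCKY : IsCKYWith B D T θ) (hB : IsInnerProduct B) (hD : IsLeviCivita B D)
    (hT : IsSkewSymmetric B T) : θ ∘ₗ T = 0 := by
  obtain ⟨b, hb⟩ := hB.exists_basis_eigenvectors (T ∘ₗ T) hT.comp_self
  refine b.ext fun i => ?_
  obtain ⟨μ, hμ⟩ := hb i
  have h := hCKY.lie_comp_self_apply_self hB.symm hD hT (b i)
  simp only [LinearMap.comp_apply] at hμ ⊢
  rw [hμ, smul_lie, lie_self, smul_zero, map_zero, LinearMap.zero_apply, eq_comm] at h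
  exact (mul_eq_zero.mp h).resolve_left (hB.posdef _ (b.ne_zero i)).ne'

end MetricLieAlgebra

/-- For a CKY tensor `T` with associated 1-form `θ` and associated vector `ξ`
on a metric Lie algebra, one has `θ ∘ T = 0`, or equivalently `T ξ = 0`. -/
theorem cky_theta_comp_T_eq_zero {g : Type*} [LieRing g] [LieAlgebra ℝ g]
    [FiniteDimensional ℝ g]
    (B : g →ₗ[ℝ] g →ₗ[ℝ] ℝ) (hB : IsInnerProduct B)
    (D : g → g → g) (hD : IsLeviCivita B D)
    (T : g →ₗ[ℝ] g) (hT : IsSkewSymmetric B T)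
    (θ : g →ₗ[ℝ] ℝ) (hCKY : IsCKYWith B D T θ)
    (ξ : g) (hξ : ∀ x : g, θ x = B ξ x) :
    (∀ x : g, θ (T x) = 0) ∧ T ξ = 0 := by
  have hθT (x : g) : θ (T x) = 0 :=
    LinearMap.congr_fun (hCKY.theta_comp_eq_zero hB hD hT) x
  refine ⟨hθT, ?_⟩
  by_contra hTξ
  have hnorm : B (T ξ) (T ξ) = 0 := by
    rw [hT, ← hξ, hθT, neg_zero]
  exact (hB.posdef _ hTξ).ne' hnorm
end

section
/- Let T be a conformal Killing-Yano tensor on a metric Lie algebra (𝔤, ⟨·,·⟩) with associated 1-form θ ≠ 0 and associated vector ξ. Then the dimension of 𝔤 is odd, the orthogonal complement ξ^⊥ is invariant under T and the restriction T|_{ξ^⊥} : ξ^⊥ → ξ^⊥ is a linear isomorphism, and ξ^⊥ is invariant under the operator ad_ξ. -/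
/-!
Setting `x = y = w` in the CKY equation gives `⟨(∇_w T)w, z⟩ = |w|² θ(z) - ⟨w, z⟩ θ(w)`.
With `z = Tw` for an eigenvector `w` of the symmetric map `T²` this yields `θ(Tw) = 0`; since
such eigenvectors span `𝔤`, `Tξ = 0`. For `w ∈ ker T` the choice `z = ξ` gives equality in the
Cauchy–Schwarz inequality for `w` and `ξ`, so `ker T = ℝξ` and `T` restricts to a skew-symmetric
automorphism of `ξ^⊥`, whose dimension is therefore even (`det T = det Tᵗ = (-1)^dim · det T`).
Finally `T(∇_ξ ξ) = 0` and `∇_ξ ξ ⊥ ξ` force `∇_ξ ξ = 0`, and `⟨[ξ, x], ξ⟩ = -⟨∇_ξ ξ, x⟩`.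
-/

open Module

theorem Submodule.existsUnique_mem_apply_eq {K M : Type*} [Field K] [AddCommGroup M] [Module K M]
    {V : Submodule K M} [FiniteDimensional K V] {T : M →ₗ[K] M} (hV : ∀ x ∈ V, T x ∈ V)
    (hker : Disjoint V (LinearMap.ker T)) {y : M} (hy : y ∈ V) : ∃! x, x ∈ V ∧ T x = y := by
  have hinj := (LinearMap.injective_restrict_iff hV).mpr hker
  obtain ⟨x, hx⟩ := LinearMap.injective_iff_surjective.mp hinj ⟨y, hy⟩
  have hTx : T x = y := congrArg Subtype.val hx
  refine ⟨x, ⟨x.2, hTx⟩, fun z ⟨hz, hTz⟩ => ?_⟩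
  exact congrArg Subtype.val (@hinj ⟨z, hz⟩ x (Subtype.ext (hTz.trans hTx.symm)))

theorem LinearMap.det_adjoint_real {E : Type*} [NormedAddCommGroup E] [InnerProductSpace ℝ E]
    [FiniteDimensional ℝ E] (T : E →ₗ[ℝ] E) : (LinearMap.adjoint T).det = T.det := by
  let b := stdOrthonormalBasis ℝ E
  rw [← LinearMap.det_toMatrix b.toBasis, LinearMap.toMatrix_adjoint, Matrix.det_conjTranspose,
    LinearMap.det_toMatrix, star_trivial]

theorem Module.even_finrank_of_injective_of_skew {E : Type*} [NormedAddCommGroup E]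
    [InnerProductSpace ℝ E] [FiniteDimensional ℝ E] {T : E →ₗ[ℝ] E}
    (hT : ∀ x y, inner ℝ (T x) y = -inner ℝ x (T y)) (hinj : Function.Injective T) :
    Even (finrank ℝ E) := by
  have hadj : LinearMap.adjoint T = -T :=
    ((LinearMap.eq_adjoint_iff (-T) T).mpr fun x y => by
      rw [LinearMap.neg_apply, inner_neg_left, hT, neg_neg]).symm
  have hdet : T.det ≠ 0 := by
    rw [Ne, LinearMap.det_eq_zero_iff_ker_ne_bot, not_not]
    exact LinearMap.ker_eq_bot.mpr hinj
  have h : (-1 : ℝ) ^ finrank ℝ E * T.det = 1 * T.det := by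
    rw [← LinearMap.det_smul, neg_one_smul, ← hadj, LinearMap.det_adjoint_real, one_mul]
  exact (neg_one_pow_eq_one_iff_even (by norm_num)).mp (mul_right_cancel₀ hdet h)

section MetricLieAlgebra

variable {g : Type*} [LieRing g] [LieAlgebra ℝ g] {B : g →ₗ[ℝ] g →ₗ[ℝ] ℝ}

theorem mem_orthComp_span_singleton {ξ x : g} :
    x ∈ orthComp B (Submodule.span ℝ {ξ}) ↔ B x ξ = 0 := by
  refine ⟨fun h => h ξ (Submodule.mem_span_singleton_self ξ), fun h y hy => ?_⟩
  obtain ⟨a, rfl⟩ := Submodule.mem_span_singleton.mp hy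
  rw [map_smul, h, smul_zero]

namespace IsInnerProduct

variable (hB : IsInnerProduct B)
include hB

abbrev toCore : InnerProductSpace.Core ℝ g where
  inner x y := B x y
  conj_inner_symm x y := hB.symm y x
  re_inner_nonneg x := by
    rcases eq_or_ne x 0 with rfl | hx
    · simp
    · exact (hB.posdef x hx).le
  add_left x y z := by simp
  smul_left x y r := by simp
  definite x hx := by
    by_contra h
    exact (hB.posdef x h).ne' hx

theorem eq_zero_of_self_eq_zero {x : g} (hx : B x x = 0) : x = 0 := by
  by_contra h
  exact (hB.posdef x h).ne' hx

theorem eq_zero_of_forall_eq_zero {x : g} (hx : ∀ y, B x y = 0) : x = 0 :=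
  hB.eq_zero_of_self_eq_zero (hx x)

theorem apply_map_self_eq_zero {T : g →ₗ[ℝ] g} (hT : IsSkewSymmetric B T) (x : g) :
    B x (T x) = 0 := by
  have := hT x x
  rw [hB.symm] at this
  linarith

/-- The equality case of the Cauchy–Schwarz inequality. -/
theorem smul_eq_smul_of_mul_self_eq {x y : g} (h : B x y * B x y = B x x * B y y) :
    B x x • y = B x y • x := by
  refine sub_eq_zero.mp (hB.eq_zero_of_self_eq_zero ?_)
  simp only [map_sub, map_smul, LinearMap.sub_apply, LinearMap.smul_apply, smul_eq_mul]
  linear_combination (-(B x x)) * h + (B x x * B x y) * hB.symm x y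

theorem finrank_orthComp_span_singleton_add_one [FiniteDimensional ℝ g] {ξ : g} (hξ : ξ ≠ 0) :
    finrank ℝ (orthComp B (Submodule.span ℝ {ξ})) + 1 = finrank ℝ g := by
  have hker : orthComp B (Submodule.span ℝ {ξ}) = LinearMap.ker (B.flip ξ) := by
    ext x
    rw [mem_orthComp_span_singleton, LinearMap.mem_ker, LinearMap.flip_apply]
  have hne : B.flip ξ ≠ 0 := fun h => (hB.posdef ξ hξ).ne' (by simpa using congrArg (· ξ) h)
  rw [hker]
  exact Module.Dual.finrank_ker_add_one_of_ne_zero hne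

theorem eq_zero_of_forall_eigenvector [FiniteDimensional ℝ g] {A : g →ₗ[ℝ] g}
    (hA : ∀ x y, B (A x) y = B x (A y)) {f : g →ₗ[ℝ] ℝ}
    (hf : ∀ (μ : ℝ) (v : g), A v = μ • v → f v = 0) : f = 0 := by
  let _ := hB.toCore.toNormedAddCommGroup
  let _ := InnerProductSpace.ofCore hB.toCore.toCore
  have hsymm : A.IsSymmetric := hA
  have hspan : ⨆ μ, Module.End.eigenspace A μ = ⊤ :=
    Submodule.orthogonal_eq_bot_iff.mp hsymm.orthogonalComplement_iSup_eigenspaces_eq_bot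
  have hle : ⨆ μ, Module.End.eigenspace A μ ≤ LinearMap.ker f :=
    iSup_le fun μ v hv => hf μ v (Module.End.mem_eigenspace_iff.mp hv)
  rwa [hspan, top_le_iff, LinearMap.ker_eq_top] at hle

theorem even_finrank_of_skew [FiniteDimensional ℝ g] {T : g →ₗ[ℝ] g} (hT : IsSkewSymmetric B T)
    {V : Submodule ℝ g} (hV : ∀ x ∈ V, T x ∈ V) (hker : Disjoint V (LinearMap.ker T)) :
    Even (finrank ℝ V) := by
  let _ := hB.toCore.toNormedAddCommGroup
  let _ := InnerProductSpace.ofCore hB.toCore.toCore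
  exact Module.even_finrank_of_injective_of_skew (T := T.restrict hV) (fun x y => hT x y)
    ((LinearMap.injective_restrict_iff hV).mpr hker)

end IsInnerProduct

namespace IsLeviCivita

variable {D : g → g → g} (hD : IsLeviCivita B D)
include hD

theorem apply_swap (x y z : g) : B (D x y) z = -B (D x z) y := by
  have h := hD x y z
  have h' := hD x z y
  rw [← lie_skew z y, ← lie_skew x z, ← lie_skew y x] at h'
  simp only [map_neg, LinearMap.neg_apply] at h'
  linarith

theorem apply_self (x y : g) : B (D x y) y = 0 := by
  linarith [hD.apply_swap x y y]

theorem apply_zero (x z : g) : B (D x 0) z = 0 := by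
  rw [hD.apply_swap, map_zero, neg_zero]

theorem lie_apply_self (x y : g) : B ⁅x, y⁆ x = -B (D x x) y := by
  have h := hD x y x
  rw [← lie_skew y x, lie_self] at h
  simp only [map_neg, map_zero, LinearMap.neg_apply, LinearMap.zero_apply] at h
  linarith [hD.apply_swap x y x]

end IsLeviCivita

namespace IsCKYWith

variable {D : g → g → g} {T : g →ₗ[ℝ] g} {θ : g →ₗ[ℝ] ℝ} (hCKY : IsCKYWith B D T θ)
include hCKY

theorem apply_diag (w z : g) :
    B (D w (T w) - T (D w w)) z = B w w * θ z - B w z * θ w := by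
  linarith [hCKY w w z]

theorem apply_map_eq_zero_of_map_map_eq_smul (hB : IsInnerProduct B) (hD : IsLeviCivita B D)
    (hT : IsSkewSymmetric B T) {μ : ℝ} {w : g} (hw : T (T w) = μ • w) : θ (T w) = 0 := by
  rcases eq_or_ne w 0 with rfl | hw0
  · simp
  have h := hCKY.apply_diag w (T w)
  rw [map_sub, LinearMap.sub_apply, hD.apply_self, hT, hw, map_smul, smul_eq_mul,
    hD.apply_self, hB.apply_map_self_eq_zero hT] at h
  exact (mul_eq_zero.mp (by linarith : B w w * θ (T w) = 0)).resolve_left (hB.posdef w hw0).ne'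

theorem map_dual_eq_zero (hB : IsInnerProduct B) (hD : IsLeviCivita B D) (hT : IsSkewSymmetric B T)
    [FiniteDimensional ℝ g] {ξ : g} (hξ : ∀ x, θ x = B ξ x) : T ξ = 0 := by
  suffices B (T ξ) = 0 from hB.eq_zero_of_forall_eq_zero fun y => by rw [this]; rfl
  refine hB.eq_zero_of_forall_eigenvector (A := T ∘ₗ T) (fun x y => ?_) fun μ v hv => ?_
  · simp only [LinearMap.comp_apply]
    rw [hT, hT, neg_neg]
  · rw [hT, ← hξ, hCKY.apply_map_eq_zero_of_map_map_eq_smul hB hD hT hv, neg_zero]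

theorem apply_map_connection_self_of_map_eq_zero (hD : IsLeviCivita B D) {w : g} (hw : T w = 0)
    (z : g) :
    B (T (D w w)) z = B w z * θ w - B w w * θ z := by
  have h := hCKY.apply_diag w z
  rw [hw, map_sub, LinearMap.sub_apply, hD.apply_zero] at h
  linarith

variable [FiniteDimensional ℝ g] (hB : IsInnerProduct B) (hD : IsLeviCivita B D)
  (hT : IsSkewSymmetric B T) {ξ : g} (hξ : ∀ x, θ x = B ξ x)
include hB hD hT hξ

theorem smul_eq_smul_of_map_eq_zero {w : g} (hw : T w = 0) : B ξ ξ • w = B ξ w • ξ := by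
  have h := hCKY.apply_map_connection_self_of_map_eq_zero hD hw ξ
  rw [hT, hCKY.map_dual_eq_zero hB hD hT hξ, map_zero, neg_zero, hξ, hξ, hB.symm w ξ] at h
  exact hB.smul_eq_smul_of_mul_self_eq (by linarith)

theorem eq_zero_of_map_eq_zero (hξ0 : ξ ≠ 0) {w : g} (hw : T w = 0) (hwξ : B w ξ = 0) :
    w = 0 := by
  have h := hCKY.smul_eq_smul_of_map_eq_zero hB hD hT hξ hw
  rw [hB.symm ξ w, hwξ, zero_smul, smul_eq_zero] at h
  exact h.resolve_left (hB.posdef ξ hξ0).ne'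

theorem connection_self_eq_zero (hξ0 : ξ ≠ 0) : D ξ ξ = 0 := by
  have hTξ := hCKY.map_dual_eq_zero hB hD hT hξ
  refine hCKY.eq_zero_of_map_eq_zero hB hD hT hξ hξ0 ?_ (hD.apply_self ξ ξ)
  refine hB.eq_zero_of_forall_eq_zero fun z => ?_
  rw [hCKY.apply_map_connection_self_of_map_eq_zero hD hTξ, hξ, hξ]
  ring

end IsCKYWith

end MetricLieAlgebra

/-- If `T` is a CKY tensor with `θ ≠ 0` on a metric Lie algebra, then `dim 𝔤`
is odd, `ξ^⊥` is `T`-invariant and `T|_{ξ^⊥} : ξ^⊥ → ξ^⊥` is a linear isomorphism, and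
`ξ^⊥` is invariant under `ad_ξ`. -/
theorem strict_cky_odd_dim_and_invariance {g : Type*} [LieRing g] [LieAlgebra ℝ g]
    [FiniteDimensional ℝ g]
    (B : g →ₗ[ℝ] g →ₗ[ℝ] ℝ) (hB : IsInnerProduct B)
    (D : g → g → g) (hD : IsLeviCivita B D)
    (T : g →ₗ[ℝ] g) (hT : IsSkewSymmetric B T)
    (θ : g →ₗ[ℝ] ℝ) (hCKY : IsCKYWith B D T θ) (hθ : θ ≠ 0)
    (ξ : g) (hξ : ∀ x : g, θ x = B ξ x) :
    Odd (Module.finrank ℝ g) ∧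
    (∀ x ∈ orthComp B (Submodule.span ℝ {ξ}), T x ∈ orthComp B (Submodule.span ℝ {ξ})) ∧
    (∀ y ∈ orthComp B (Submodule.span ℝ {ξ}),
      ∃! x, x ∈ orthComp B (Submodule.span ℝ {ξ}) ∧ T x = y) ∧
    (∀ x ∈ orthComp B (Submodule.span ℝ {ξ}), ⁅ξ, x⁆ ∈ orthComp B (Submodule.span ℝ {ξ})) := by
  have hξ0 : ξ ≠ 0 := by
    rintro rfl
    exact hθ (LinearMap.ext fun x => by rw [hξ, map_zero, LinearMap.zero_apply])
  set V := orthComp B (Submodule.span ℝ {ξ})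
  have hTV : ∀ x ∈ V, T x ∈ V := fun x _ => by
    rw [mem_orthComp_span_singleton, hT, hCKY.map_dual_eq_zero hB hD hT hξ, map_zero, neg_zero]
  have hker : Disjoint V (LinearMap.ker T) :=
    Submodule.disjoint_def.mpr fun w hwV hw => hCKY.eq_zero_of_map_eq_zero hB hD hT hξ hξ0 hw
      (mem_orthComp_span_singleton.mp hwV)
  refine ⟨?_, hTV, fun y hy => Submodule.existsUnique_mem_apply_eq hTV hker hy, fun x _ => ?_⟩
  · rw [← hB.finrank_orthComp_span_singleton_add_one hξ0]
    exact (hB.even_finrank_of_skew hT hTV hker).add_one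
  · rw [mem_orthComp_span_singleton, hD.lie_apply_self,
      hCKY.connection_self_eq_zero hB hD hT hξ hξ0, map_zero, LinearMap.zero_apply, neg_zero]
end

section
/- Let (𝔥, [·,·], ⟨·,·⟩) be a metric Lie algebra and let S be an invertible Killing-Yano tensor on 𝔥 such that the 2-form μ(x,y) := −2⟨S^{-1}x, y⟩ is closed, i.e. μ([x,y], z) + μ([y,z], x) + μ([z,x], y) = 0 for all x, y, z ∈ 𝔥. Let 𝔤 := 𝔥 ⊕ ℝξ be the central extension of 𝔥 by μ: the direct sum vector space with bracket [x + aξ, y + bξ]_μ := [x, y] + μ(x, y)ξ for x, y ∈ 𝔥 and a, b ∈ ℝ, with the inner product extending that of 𝔥 by ⟨𝔥, ξ⟩ = 0 and |ξ| = c for an arbitrary fixed c > 0. Then [·,·]_μ is a Lie bracket on 𝔤 (ξ is central), and the endomorphism T of 𝔤 defined by T|_𝔥 = S and Tξ = 0 is a strict conformal Killing-Yano tensor on (𝔤, ⟨·,·⟩). -/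
section CentralExtension

variable {h : Type*} [LieRing h] [LieAlgebra ℝ h]

/-- The inner product on the central extension `𝔤 = 𝔥 ⊕ ℝξ`, where `ξ = (0, 1)` is
orthogonal to `𝔥` and `|ξ| = c`. -/
def extInner (B : h →ₗ[ℝ] h →ₗ[ℝ] ℝ) (c : ℝ) (u v : h × ℝ) : ℝ :=
  B u.1 v.1 + c ^ 2 * u.2 * v.2

/-- The bracket of the central extension `𝔥 ⊕_μ ℝξ`:
`[x + aξ, y + bξ]_μ = [x, y] + μ(x, y)ξ`. -/
def extBracket (μ : h → h → ℝ) (u v : h × ℝ) : h × ℝ :=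
  (⁅u.1, v.1⁆, μ u.1 v.1)

/-- The extension of the endomorphism `S` of `𝔥` to `𝔤 = 𝔥 ⊕ ℝξ` with `Tξ = 0`. -/
def extT (S : h →ₗ[ℝ] h) (u : h × ℝ) : h × ℝ :=
  (S u.1, 0)

/-- given an invertible KY tensor `S` on a metric Lie algebra `(𝔥, B)` such
that the 2-form `μ(x,y) = −2⟨S⁻¹x, y⟩` is closed, the central extension
`𝔤 = 𝔥 ⊕_μ ℝξ` (with `⟨𝔥, ξ⟩ = 0`, `|ξ| = c > 0`) is a Lie algebra with `ξ` central, and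
the endomorphism `T` with `T|_𝔥 = S`, `Tξ = 0` is a strict CKY tensor on `𝔤`
(with respect to any `D'` satisfying the Koszul formula of the extended metric). -/
theorem central_extension_strict_cky
    {h : Type*} [LieRing h] [LieAlgebra ℝ h] [FiniteDimensional ℝ h]
    (B : h →ₗ[ℝ] h →ₗ[ℝ] ℝ) (hB : IsInnerProduct B)
    (D : h → h → h) (hD : IsLeviCivita B D)
    (S : h →ₗ[ℝ] h) (hSskew : IsSkewSymmetric B S) (hSinv : Function.Bijective S)
    (hSKY : IsKY B D S)
    (μ : h → h → ℝ) (hμ : ∀ x y : h, μ (S x) y = -2 * B x y)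
    (hclosed : ∀ x y z : h, μ ⁅x, y⁆ z + μ ⁅y, z⁆ x + μ ⁅z, x⁆ y = 0)
    (c : ℝ) (hc : 0 < c)
    (D' : h × ℝ → h × ℝ → h × ℝ)
    (hD' : ∀ u v w : h × ℝ, 2 * extInner B c (D' u v) w =
      extInner B c (extBracket μ u v) w - extInner B c (extBracket μ v w) u
        + extInner B c (extBracket μ w u) v) :
    (∀ u : h × ℝ, extBracket μ u u = 0) ∧
    (∀ u v w : h × ℝ,
      extBracket μ u (extBracket μ v w) + extBracket μ v (extBracket μ w u)
        + extBracket μ w (extBracket μ u v) = 0) ∧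
    (∀ u : h × ℝ, extBracket μ u ((0 : h), (1 : ℝ)) = 0) ∧
    ∃ θ : h × ℝ →ₗ[ℝ] ℝ, θ ≠ 0 ∧
      (∀ u v : h × ℝ, extInner B c (extT S u) v = - extInner B c u (extT S v)) ∧
      (∀ u v w : h × ℝ,
        extInner B c (D' u (extT S v) - extT S (D' u v)) w
          + extInner B c (D' v (extT S u) - extT S (D' v u)) w =
        2 * extInner B c u v * θ w - extInner B c v w * θ u - extInner B c u w * θ v) := by
  -- auxiliary facts about μ
  have hsk : ∀ x y : h, B (S x) y = - B x (S y) := hSskew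
  have hμ2 : ∀ p q : h, μ p (S q) = 2 * B p q := by
    intro p q
    obtain ⟨p', rfl⟩ := hSinv.2 p
    have h1 := hμ p' (S q)
    have h2 := hSskew p' q
    linarith
  have hskew : ∀ p q : h, μ p q = - μ q p := by
    intro p q
    obtain ⟨p', rfl⟩ := hSinv.2 p
    obtain ⟨q', rfl⟩ := hSinv.2 q
    have h1 := hμ p' (S q')
    have h2 := hμ q' (S p')
    have h3 := hSskew q' p'
    have h4 := hB.symm (S q') p'
    linarith
  have hz : ∀ p : h, μ p 0 = 0 := by
    intro p
    have := hμ2 p 0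
    simpa using this
  refine ⟨?_, ?_, ?_, ?_⟩
  · intro u
    have h1 : μ u.1 u.1 = 0 := by have := hskew u.1 u.1; linarith
    simp [extBracket, h1, Prod.ext_iff]
  · intro u v w
    have h1 := hclosed u.1 v.1 w.1
    have h2 := hskew u.1 ⁅v.1, w.1⁆
    have h3 := hskew v.1 ⁅w.1, u.1⁆
    have h4 := hskew w.1 ⁅u.1, v.1⁆
    have hj := lie_jacobi u.1 v.1 w.1
    simp only [extBracket, Prod.mk_add_mk, Prod.mk_eq_zero]
    constructor
    · exact hj
    · linarith
  · intro u
    simp [extBracket, hz, Prod.ext_iff]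
  · refine ⟨(c ^ 2) • LinearMap.snd ℝ h ℝ, ?_, ?_, ?_⟩
    · intro hθ
      have h0 := LinearMap.congr_fun hθ ((0 : h), (1 : ℝ))
      simp at h0
      exact absurd h0 (by positivity)
    · intro u v
      simp only [extInner, extT, hsk, mul_zero, zero_mul, add_zero]
    · intro u v w
      have h1 := hD' u (extT S v) w
      have h2 := hD' u v (extT S w)
      have h3 := hD' v (extT S u) w
      have h4 := hD' v u (extT S w)
      have hky := hSKY u.1 v.1 w.1
      have hd1 := hD u.1 (S v.1) w.1
      have hd2 := hD u.1 v.1 (S w.1)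
      have hd3 := hD v.1 (S u.1) w.1
      have hd4 := hD v.1 u.1 (S w.1)
      simp only [IsKY, IsCKYWith, LinearMap.zero_apply, mul_zero, sub_zero, zero_mul] at hky
      simp only [extInner, extBracket, extT, Prod.fst_sub, Prod.snd_sub, map_sub,
        LinearMap.sub_apply, hμ, hμ2, hsk, mul_zero, zero_mul, add_zero, sub_zero,
        LinearMap.smul_apply, LinearMap.snd_apply, smul_eq_mul] at h1 h2 h3 h4 hky ⊢
      linear_combination (h1 + h2 + h3 + h4 + 2 * hky - hd1 - hd2 - hd3 - hd4
        + 2 * c ^ 2 * w.2 * (hB.symm v.1 u.1) - 2 * c ^ 2 * u.2 * (hB.symm w.1 v.1)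
        - 2 * c ^ 2 * v.2 * (hB.symm w.1 u.1)) / 2

end CentralExtension
end

section
/- Let (𝔤, ⟨·,·⟩) be a metric Lie algebra whose inner product is bi-invariant, i.e. ad_x is skew-symmetric for every x ∈ 𝔤, and let T be a skew-symmetric endomorphism of 𝔤. Then T is a Killing-Yano tensor if and only if T vanishes on the commutator ideal [𝔤, 𝔤]. In particular, if 𝔤 = [𝔤, 𝔤] (for instance if 𝔤 is semisimple of compact type), then the only Killing-Yano tensor on (𝔤, ⟨·,·⟩) is T = 0. -/
/-- On a metric Lie algebra with bi-invariant inner product, a skew-symmetric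
endomorphism `T` is a Killing-Yano tensor iff it vanishes on the commutator ideal
`[𝔤, 𝔤]`; in particular if `𝔤 = [𝔤, 𝔤]` then the only KY tensor is `T = 0`. -/
theorem biinvariant_ky_iff_vanishes_on_commutator {g : Type*} [LieRing g] [LieAlgebra ℝ g]
    [FiniteDimensional ℝ g]
    (B : g →ₗ[ℝ] g →ₗ[ℝ] ℝ) (hB : IsInnerProduct B)
    (hbi : ∀ x y z : g, B ⁅x, y⁆ z = - B y ⁅x, z⁆)
    (D : g → g → g) (hD : IsLeviCivita B D)
    (T : g →ₗ[ℝ] g) (hT : IsSkewSymmetric B T) :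
    (IsKY B D T ↔ ∀ x y : g, T ⁅x, y⁆ = 0) ∧
    (Submodule.span ℝ {w : g | ∃ x y : g, w = ⁅x, y⁆} = ⊤ → IsKY B D T → T = 0) := by

  -- Basic consequences of positivity: nondegeneracy
  have hpos : ∀ v : g, B v v = 0 → v = 0 := by
    intro v hv
    by_contra h
    exact (hB.posdef v h).ne' hv
  have hnd : ∀ v : g, (∀ z : g, B v z = 0) → v = 0 := fun v h => hpos v (h v)
  have hsy := hB.symm
  -- invariance: B ⁅a,b⁆ c = B a ⁅b,c⁆
  have hinv : ∀ a b c : g, B ⁅a, b⁆ c = B a ⁅b, c⁆ := by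
    intro a b c
    have h1 : B a ⁅b, c⁆ = B ⁅b, c⁆ a := hsy a ⁅b, c⁆
    rw [h1, hbi b c a]
    have h2 : ⁅b, a⁆ = -⁅a, b⁆ := (lie_skew b a).symm
    rw [h2, map_neg, hsy c ⁅a, b⁆, neg_neg]
  -- the Levi-Civita connection values
  have hDval : ∀ x y z : g, 2 * B (D x y) z = B ⁅x, y⁆ z := by
    intro x y z
    have h := hD x y z
    have e1 : B ⁅y, z⁆ x = B ⁅x, y⁆ z := by
      rw [hinv y z x, hsy y ⁅z, x⁆, hinv z x y, hsy z ⁅x, y⁆]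
    have e2 : B ⁅z, x⁆ y = B ⁅x, y⁆ z := by
      rw [hinv z x y, hsy z ⁅x, y⁆]
    rw [e1, e2] at h
    linarith
  have hDT : ∀ x y z : g, 2 * B (T (D x y)) z = B (T ⁅x, y⁆) z := by
    intro x y z
    rw [hT (D x y) z, hT ⁅x, y⁆ z]
    have := hDval x y (T z)
    linarith
  -- IsKY is equivalent to the algebraic condition ⁅x,Ty⁆ + ⁅y,Tx⁆ = 0
  have hKY_iff : IsKY B D T ↔ ∀ x y : g, ⁅x, T y⁆ + ⁅y, T x⁆ = 0 := by
    constructor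
    · intro hky x y
      apply hnd
      intro z
      have h := hky x y z
      simp only [LinearMap.zero_apply, mul_zero, sub_zero] at h
      simp only [map_sub, LinearMap.sub_apply] at h
      have h1 := hDval x (T y) z
      have h2 := hDval y (T x) z
      have h3 := hDT x y z
      have h4 := hDT y x z
      have h5 : B (T ⁅y, x⁆) z = - B (T ⁅x, y⁆) z := by
        have hyx : ⁅y, x⁆ = -⁅x, y⁆ := (lie_skew y x).symm
        rw [hyx, map_neg, map_neg, LinearMap.neg_apply]
      simp only [map_add, LinearMap.add_apply]
      linarith
    · intro hc x y z
      have h6 : B (⁅x, T y⁆ + ⁅y, T x⁆) z = 0 := by rw [hc x y]; simp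
      simp only [map_add, LinearMap.add_apply] at h6
      simp only [LinearMap.zero_apply, mul_zero, sub_zero]
      simp only [map_sub, LinearMap.sub_apply]
      have h1 := hDval x (T y) z
      have h2 := hDval y (T x) z
      have h3 := hDT x y z
      have h4 := hDT y x z
      have h5 : B (T ⁅y, x⁆) z = - B (T ⁅x, y⁆) z := by
        have hyx : ⁅y, x⁆ = -⁅x, y⁆ := (lie_skew y x).symm
        rw [hyx, map_neg, map_neg, LinearMap.neg_apply]
      linarith
  -- the algebraic condition is equivalent to vanishing on brackets
  have hmain : (∀ x y : g, ⁅x, T y⁆ + ⁅y, T x⁆ = 0) ↔ ∀ x y : g, T ⁅x, y⁆ = 0 := by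
    constructor
    · intro hc
      have hc1 : ∀ a b : g, ⁅a, T b⁆ = ⁅T a, b⁆ := by
        intro a b
        have h1 : ⁅a, T b⁆ = -⁅b, T a⁆ := eq_neg_of_add_eq_zero_left (hc a b)
        rw [h1, lie_skew]
      have hc2 : ∀ a b : g, T ⁅a, b⁆ = - ⁅a, T b⁆ := by
        intro a b
        have key : ∀ w : g, B (T ⁅a, b⁆ + ⁅a, T b⁆) w = 0 := by
          intro w
          simp only [map_add, LinearMap.add_apply]
          rw [hT ⁅a, b⁆ w, hinv a b (T w), hc1 b w, ← hinv a (T b) w]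
          ring
        have h0 := hnd _ key
        exact eq_neg_of_add_eq_zero_left h0
      have hc3 : ∀ x y w : g, ⁅x, ⁅y, T w⁆⁆ = 0 := by
        intro x y w
        have e1 : ⁅T ⁅x, y⁆, w⁆ = ⁅x, ⁅y, T w⁆⁆ - ⁅y, ⁅x, T w⁆⁆ := by
          rw [← hc1 ⁅x, y⁆ w]
          exact lie_lie x y (T w)
        have e2 : ⁅T ⁅x, y⁆, w⁆ = -⁅x, ⁅y, T w⁆⁆ - ⁅y, ⁅x, T w⁆⁆ := by
          rw [hc2 x y, neg_lie, lie_lie, ← hc1 y w, ← hc1 y ⁅x, w⁆, hc2 x w, lie_neg]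
          abel
        have e3 : ⁅x, ⁅y, T w⁆⁆ + ⁅x, ⁅y, T w⁆⁆ = 0 := by
          have h := e1.symm.trans e2
          have h' : ⁅x, ⁅y, T w⁆⁆ = -⁅x, ⁅y, T w⁆⁆ := sub_left_inj.mp h
          exact eq_neg_iff_add_eq_zero.mp h'
        have e4 : (2 : ℝ) • ⁅x, ⁅y, T w⁆⁆ = 0 := by
          rw [two_smul]; exact e3
        have := smul_eq_zero.mp e4
        rcases this with h | h
        · norm_num at h
        · exact h
      intro x y
      rw [hc2 x y]
      have hz : ⁅x, T y⁆ = 0 := by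
        apply hpos
        rw [hinv x (T y) ⁅x, T y⁆, hc3 (T y) x y, map_zero]
      rw [hz, neg_zero]
    · intro hz x y
      have hcen : ∀ v w : g, ⁅T v, w⁆ = 0 := by
        intro v w
        apply hpos
        rw [hinv (T v) w ⁅T v, w⁆, hT v ⁅w, ⁅T v, w⁆⁆, hz w ⁅T v, w⁆, map_zero]
        ring
      have h1 : ⁅x, T y⁆ = 0 := by rw [← lie_skew, hcen y x, neg_zero]
      have h2 : ⁅y, T x⁆ = 0 := by rw [← lie_skew, hcen x y, neg_zero]
      rw [h1, h2, add_zero]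
  refine ⟨hKY_iff.trans hmain, ?_⟩
  intro hspan hky
  have hz := hmain.mp (hKY_iff.mp hky)
  have h1 : Submodule.span ℝ {w : g | ∃ x y : g, w = ⁅x, y⁆} ≤ LinearMap.ker T := by
    apply Submodule.span_le.mpr
    rintro w ⟨x, y, rfl⟩
    exact LinearMap.mem_ker.mpr (hz x y)
  rw [hspan] at h1
  exact LinearMap.ker_eq_top.mp (top_le_iff.mp h1)
end

section
/- Let su(2) denote the 3-dimensional real Lie algebra with basis f1, f2, f3 and brackets [f1, f2] = f3, [f2, f3] = f1, [f3, f1] = f2. For every inner product ⟨·,·⟩ on su(2), every Killing-Yano tensor on the metric Lie algebra (su(2), ⟨·,·⟩) is zero. -/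
set_option maxHeartbeats 2000000 in
/-- On `su(2)` (brackets `[f1,f2]=f3`, `[f2,f3]=f1`, `[f3,f1]=f2`) with an
arbitrary inner product, every Killing-Yano tensor is zero. -/
theorem su2_ky_trivial {g : Type*} [LieRing g] [LieAlgebra ℝ g]
    (f : Module.Basis (Fin 3) ℝ g)
    (h01 : ⁅f 0, f 1⁆ = f 2) (h12 : ⁅f 1, f 2⁆ = f 0) (h20 : ⁅f 2, f 0⁆ = f 1)
    (B : g →ₗ[ℝ] g →ₗ[ℝ] ℝ) (hB : IsInnerProduct B)
    (D : g → g → g) (hD : IsLeviCivita B D)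
    (T : g →ₗ[ℝ] g) (hT : IsSkewSymmetric B T) (hKY : IsKY B D T) :
    T = 0 := by
  
  classical
  -- θ = 0 form of the KY condition
  have hKY' : ∀ x y z : g,
      B (D x (T y) - T (D x y)) z + B (D y (T x) - T (D y x)) z = 0 := by
    intro x y z
    have h := hKY x y z
    simpa using h
  -- The fully algebraic form of the KY condition (D eliminated via Koszul and skewness)
  have hF : ∀ x y z : g,
      ((B ⁅x, T y⁆ z - B ⁅T y, z⁆ x + B ⁅z, x⁆ (T y)) +
       (B ⁅x, y⁆ (T z) - B ⁅y, T z⁆ x + B ⁅T z, x⁆ y)) +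
      ((B ⁅y, T x⁆ z - B ⁅T x, z⁆ y + B ⁅z, y⁆ (T x)) +
       (B ⁅y, x⁆ (T z) - B ⁅x, T z⁆ y + B ⁅T z, y⁆ x)) = 0 := by
    intro x y z
    have h1 := hD x (T y) z
    have h2 := hD x y (T z)
    have h3 := hD y (T x) z
    have h4 := hD y x (T z)
    have h5 := hKY' x y z
    have s1 := hT (D x y) z
    have s2 := hT (D y x) z
    simp only [map_sub, LinearMap.sub_apply] at h5
    linarith
  -- bracket table
  have h00 : ⁅f 0, f 0⁆ = (0 : g) := lie_self _
  have h11 : ⁅f 1, f 1⁆ = (0 : g) := lie_self _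
  have h22 : ⁅f 2, f 2⁆ = (0 : g) := lie_self _
  have h10 : ⁅f 1, f 0⁆ = -f 2 := by rw [← lie_skew, h01]
  have h21 : ⁅f 2, f 1⁆ = -f 0 := by rw [← lie_skew, h12]
  have h02 : ⁅f 0, f 2⁆ = -f 1 := by rw [← lie_skew, h20]
  -- coordinates of T
  have hrep : ∀ x : g, x = f.repr x 0 • f 0 + f.repr x 1 • f 1 + f.repr x 2 • f 2 := by
    intro x
    have h := f.sum_repr x
    rw [Fin.sum_univ_three] at h
    exact h.symm
  obtain ⟨t00, t10, t20, hTf0⟩ : ∃ a b c : ℝ, T (f 0) = a • f 0 + b • f 1 + c • f 2 :=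
    ⟨_, _, _, hrep (T (f 0))⟩
  obtain ⟨t01, t11, t21, hTf1⟩ : ∃ a b c : ℝ, T (f 1) = a • f 0 + b • f 1 + c • f 2 :=
    ⟨_, _, _, hrep (T (f 1))⟩
  obtain ⟨t02, t12, t22, hTf2⟩ : ∃ a b c : ℝ, T (f 2) = a • f 0 + b • f 1 + c • f 2 :=
    ⟨_, _, _, hrep (T (f 2))⟩
  -- symmetry normalisations
  have hs10 : B (f 1) (f 0) = B (f 0) (f 1) := hB.symm _ _
  have hs20 : B (f 2) (f 0) = B (f 0) (f 2) := hB.symm _ _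
  have hs21 : B (f 2) (f 1) = B (f 1) (f 2) := hB.symm _ _
  -- instantiated/expanded KY equations
  have E001 := hF (f 0) (f 0) (f 1)
  have E002 := hF (f 0) (f 0) (f 2)
  have E011 := hF (f 0) (f 1) (f 1)
  have E012 := hF (f 0) (f 1) (f 2)
  have E021 := hF (f 0) (f 2) (f 1)
  have E022 := hF (f 0) (f 2) (f 2)
  have E112 := hF (f 1) (f 1) (f 2)
  have E122 := hF (f 1) (f 2) (f 2)
  have SK00 := hT (f 0) (f 0)
  have SK01 := hT (f 0) (f 1)
  have SK02 := hT (f 0) (f 2)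
  have SK11 := hT (f 1) (f 1)
  have SK12 := hT (f 1) (f 2)
  have SK22 := hT (f 2) (f 2)
  simp only [hTf0, hTf1, hTf2, lie_add, add_lie, lie_smul, smul_lie, lie_neg, neg_lie,
    h00, h11, h22, h01, h12, h20, h10, h21, h02,
    map_add, map_smul, map_neg, map_zero, map_sub, smul_neg,
    LinearMap.add_apply, LinearMap.smul_apply, LinearMap.neg_apply, LinearMap.zero_apply,
    LinearMap.sub_apply, smul_eq_mul, zero_lie, lie_zero, hs10, hs20, hs21]
    at E001 E002 E011 E012 E021 E022 E112 E122 SK00 SK01 SK02 SK11 SK12 SK22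
  -- the three key linear consequences: B(f k, ξ) = 0 with ξ dual to T
  obtain ⟨uu, huu⟩ : ∃ r : ℝ, r = t01 * B (f 0) (f 0) + t11 * B (f 0) (f 1) + t21 * B (f 0) (f 2) := ⟨_, rfl⟩
  obtain ⟨vv, hvv⟩ : ∃ r : ℝ, r = t02 * B (f 0) (f 0) + t12 * B (f 0) (f 1) + t22 * B (f 0) (f 2) := ⟨_, rfl⟩
  obtain ⟨ww, hww⟩ : ∃ r : ℝ, r = t02 * B (f 0) (f 1) + t12 * B (f 1) (f 1) + t22 * B (f 1) (f 2) := ⟨_, rfl⟩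
  have tgt0 : B (f 0) (f 0) * ww - B (f 0) (f 1) * vv + B (f 0) (f 2) * uu = 0 := by
    rw [huu, hvv, hww]
    linear_combination (1/2 : ℝ) * (B (f 2) (f 2)) * E011 + (-1/2 : ℝ) * (B (f 1) (f 2)) * E012 + (-1/2 : ℝ) * (B (f 1) (f 2)) * E021 + (1/2 : ℝ) * (B (f 1) (f 1)) * E022 + (1/4 : ℝ) * (B (f 0) (f 2)) * E112 + (-1/2 : ℝ) * (B (f 0) (f 1)) * E122 + (1 : ℝ) * (B (f 0) (f 2)) * SK01 + (-1 : ℝ) * (B (f 0) (f 1)) * SK02 + (1/2 : ℝ) * (B (f 1) (f 2)) * SK11 + (1/2 : ℝ) * (B (f 0) (f 0)) * SK12 + (-1/2 : ℝ) * (B (f 1) (f 1)) * SK12 + (1/2 : ℝ) * (B (f 2) (f 2)) * SK12 + (-1/2 : ℝ) * (B (f 1) (f 2)) * SK22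
  have tgt1 : B (f 0) (f 1) * ww - B (f 1) (f 1) * vv + B (f 1) (f 2) * uu = 0 := by
    rw [huu, hvv, hww]
    linear_combination (-1/4 : ℝ) * (B (f 2) (f 2)) * E001 + (1/4 : ℝ) * (B (f 1) (f 2)) * E002 + (1/2 : ℝ) * (B (f 0) (f 2)) * E021 + (-1/2 : ℝ) * (B (f 0) (f 1)) * E022 + (1/2 : ℝ) * (B (f 0) (f 0)) * E122 + (-1/2 : ℝ) * (B (f 0) (f 2)) * SK00 + (1/2 : ℝ) * (B (f 0) (f 0)) * SK02 + (-1/2 : ℝ) * (B (f 1) (f 1)) * SK02 + (-1/2 : ℝ) * (B (f 2) (f 2)) * SK02 + (1 : ℝ) * (B (f 0) (f 1)) * SK12 + (1/2 : ℝ) * (B (f 0) (f 2)) * SK22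
  have tgt2 : B (f 0) (f 2) * ww - B (f 1) (f 2) * vv + B (f 2) (f 2) * uu = 0 := by
    rw [huu, hvv, hww]
    linear_combination (1/4 : ℝ) * (B (f 1) (f 2)) * E001 + (-1/4 : ℝ) * (B (f 1) (f 1)) * E002 + (-1/2 : ℝ) * (B (f 0) (f 2)) * E011 + (1/2 : ℝ) * (B (f 0) (f 1)) * E012 + (-1/4 : ℝ) * (B (f 0) (f 0)) * E112 + (1/2 : ℝ) * (B (f 0) (f 1)) * SK00 + (-1/2 : ℝ) * (B (f 0) (f 0)) * SK01 + (1/2 : ℝ) * (B (f 1) (f 1)) * SK01 + (1/2 : ℝ) * (B (f 2) (f 2)) * SK01 + (-1/2 : ℝ) * (B (f 0) (f 1)) * SK11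
  -- the dual vector ξ
  obtain ⟨xi, hxi⟩ : ∃ x : g, x = ww • f 0 + (-vv) • f 1 + uu • f 2 := ⟨_, rfl⟩
  have hx0 : B (f 0) xi = 0 := by
    rw [hxi]
    simp only [map_add, map_smul, smul_eq_mul]
    linear_combination tgt0
  have hx1 : B (f 1) xi = 0 := by
    rw [hxi]
    simp only [map_add, map_smul, smul_eq_mul, hs10]
    linear_combination tgt1
  have hx2 : B (f 2) xi = 0 := by
    rw [hxi]
    simp only [map_add, map_smul, smul_eq_mul, hs20, hs21]
    linear_combination tgt2
  have hxixi : B xi xi = 0 := by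
    nth_rewrite 1 [hxi]
    simp only [map_add, map_smul, LinearMap.add_apply, LinearMap.smul_apply, smul_eq_mul,
      hx0, hx1, hx2]
    ring
  have hxi0 : xi = 0 := by
    by_contra hne
    exact (hB.posdef xi hne).ne' hxixi
  -- extract coefficients
  have hw0 : ww = 0 := by
    have h := congrArg (fun x => f.repr x 0) hxi0
    rw [hxi] at h
    simpa [map_add, map_smul, Module.Basis.repr_self, Finsupp.single_apply] using h
  have hv0 : vv = 0 := by
    have h := congrArg (fun x => f.repr x 1) hxi0
    rw [hxi] at h
    have : -vv = 0 := by
      simpa [map_add, map_smul, Module.Basis.repr_self, Finsupp.single_apply] using h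
    linarith
  have hu0 : uu = 0 := by
    have h := congrArg (fun x => f.repr x 2) hxi0
    rw [hxi] at h
    simpa [map_add, map_smul, Module.Basis.repr_self, Finsupp.single_apply] using h
  -- all matrix entries of B ∘ T vanish
  have hb01 : B (f 0) (T (f 1)) = 0 := by
    rw [hTf1]
    simp only [map_add, map_smul, smul_eq_mul]
    linear_combination hu0 - huu
  have hb02 : B (f 0) (T (f 2)) = 0 := by
    rw [hTf2]
    simp only [map_add, map_smul, smul_eq_mul]
    linear_combination hv0 - hvv
  have hb12 : B (f 1) (T (f 2)) = 0 := by
    rw [hTf2]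
    simp only [map_add, map_smul, smul_eq_mul, hs10]
    linear_combination hw0 - hww
  have hdiag : ∀ i : Fin 3, B (f i) (T (f i)) = 0 := by
    intro i
    have h := hT (f i) (f i)
    have hsym := hB.symm (T (f i)) (f i)
    linarith [h, hsym]
  have hb10 : B (f 1) (T (f 0)) = 0 := by
    have h := hT (f 0) (f 1)
    have hsym := hB.symm (T (f 0)) (f 1)
    rw [h, hb01] at hsym
    linarith
  have hb20 : B (f 2) (T (f 0)) = 0 := by
    have h := hT (f 0) (f 2)
    have hsym := hB.symm (T (f 0)) (f 2)
    rw [h, hb02] at hsym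
    linarith
  have hb21 : B (f 2) (T (f 1)) = 0 := by
    have h := hT (f 1) (f 2)
    have hsym := hB.symm (T (f 1)) (f 2)
    rw [h, hb12] at hsym
    linarith
  -- T vanishes on the basis
  have hTzero : ∀ j : Fin 3, T (f j) = 0 := by
    have key : ∀ j : Fin 3, B (f 0) (T (f j)) = 0 → B (f 1) (T (f j)) = 0 →
        B (f 2) (T (f j)) = 0 → T (f j) = 0 := by
      intro j k0 k1 k2
      by_contra hne
      have hp := hB.posdef (T (f j)) hne
      have hz : B (T (f j)) (T (f j)) = 0 := by
        nth_rewrite 1 [hrep (T (f j))]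
        simp only [map_add, map_smul, LinearMap.add_apply, LinearMap.smul_apply, smul_eq_mul,
          k0, k1, k2]
        ring
      rw [hz] at hp
      exact lt_irrefl 0 hp
    intro j
    fin_cases j
    · exact key 0 (hdiag 0) hb10 hb20
    · exact key 1 hb01 (hdiag 1) hb21
    · exact key 2 hb02 hb12 (hdiag 2)
  refine Module.Basis.ext f fun i => ?_
  rw [hTzero i]
  simp
end

section
/- Let (𝔤, ⟨·,·⟩) be a non-abelian metric Lie algebra whose inner product is flat, i.e. there is an orthogonal direct sum decomposition 𝔤 = 𝔞 ⊕ 𝔲 where 𝔲 is an abelian ideal of 𝔤, 𝔞 is an abelian subalgebra, and ad_x is skew-symmetric for all x ∈ 𝔞. Then every conformal Killing-Yano tensor T on (𝔤, ⟨·,·⟩) is parallel; in particular its associated 1-form θ is zero. -/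
/-- On a non-abelian metric Lie algebra with flat left-invariant metric
(orthogonal decomposition `𝔤 = 𝔞 ⊕ 𝔲`, `𝔲` abelian ideal, `𝔞` abelian subalgebra, `ad_x`
skew for `x ∈ 𝔞`), every CKY tensor is parallel; in particular `θ = 0`. -/
theorem flat_cky_is_parallel {g : Type*} [LieRing g] [LieAlgebra ℝ g]
    [FiniteDimensional ℝ g]
    (B : g →ₗ[ℝ] g →ₗ[ℝ] ℝ) (hB : IsInnerProduct B)
    (a u : Submodule ℝ g)
    (horth : ∀ x ∈ a, ∀ y ∈ u, B x y = 0)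
    (hsum : a ⊔ u = ⊤)
    (huideal : ∀ x : g, ∀ y ∈ u, ⁅x, y⁆ ∈ u)
    (huab : ∀ x ∈ u, ∀ y ∈ u, ⁅x, y⁆ = (0 : g))
    (haab : ∀ x ∈ a, ∀ y ∈ a, ⁅x, y⁆ = (0 : g))
    (hadskew : ∀ x ∈ a, ∀ y z : g, B ⁅x, y⁆ z = - B y ⁅x, z⁆)
    (hnonab : ∃ x y : g, ⁅x, y⁆ ≠ 0)
    (D : g → g → g) (hD : IsLeviCivita B D)
    (T : g →ₗ[ℝ] g) (hT : IsSkewSymmetric B T)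
    (θ : g →ₗ[ℝ] ℝ) (hCKY : IsCKYWith B D T θ) :
    IsParallelT D T ∧ θ = 0 := by
  -- nondegeneracy
  have hnd : ∀ v : g, (∀ z : g, B v z = 0) → v = 0 := by
    intro v h
    by_contra hv
    exact absurd (h v) (ne_of_gt (hB.posdef v hv))
  have hdec : ∀ x : g, ∃ p ∈ a, ∃ q ∈ u, p + q = x := by
    intro x
    have hx : x ∈ a ⊔ u := by rw [hsum]; exact Submodule.mem_top
    exact Submodule.mem_sup.mp hx
  have horth' : ∀ x ∈ u, ∀ y ∈ a, B x y = 0 := by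
    intro x hx y hy
    rw [hB.symm]
    exact horth y hy x hx
  -- every bracket lies in u
  have hbrk : ∀ y z : g, ⁅y, z⁆ ∈ u := by
    intro y z
    obtain ⟨ya, hya, yu, hyu, rfl⟩ := hdec y
    obtain ⟨za, hza, zu, hzu, rfl⟩ := hdec z
    have h1 : ⁅ya + yu, za + zu⁆ = ⁅ya, zu⁆ + -⁅za, yu⁆ := by
      rw [add_lie, lie_add, lie_add, haab ya hya za hza, huab yu hyu zu hzu,
        ← lie_skew yu za]
      abel
    rw [h1]
    exact u.add_mem (huideal ya zu hzu) (u.neg_mem (huideal za yu hyu))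
  -- value of the Levi-Civita connection
  have hDval : ∀ p ∈ a, ∀ q ∈ u, ∀ y : g, D (p + q) y = ⁅p, y⁆ := by
    intro p hp q hq y
    have key : ∀ z : g, B (D (p + q) y - ⁅p, y⁆) z = 0 := by
      intro z
      obtain ⟨ya, hya, yu, hyu, rfl⟩ := hdec y
      obtain ⟨za, hza, zu, hzu, rfl⟩ := hdec z
      have hk := hD (p + q) (ya + yu) (za + zu)
      have c0 : ⁅p, ya + yu⁆ = ⁅p, yu⁆ := by
        rw [lie_add, haab p hp ya hya, zero_add]
      have c1 : ⁅p + q, ya + yu⁆ = ⁅p, yu⁆ + ⁅q, ya⁆ := by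
        rw [add_lie, lie_add, lie_add, haab p hp ya hya, huab q hq yu hyu]
        abel
      have c2 : ⁅ya + yu, za + zu⁆ = ⁅ya, zu⁆ + ⁅yu, za⁆ := by
        rw [add_lie, lie_add, lie_add, haab ya hya za hza, huab yu hyu zu hzu]
        abel
      have c3 : ⁅za + zu, p + q⁆ = ⁅za, q⁆ + ⁅zu, p⁆ := by
        rw [add_lie, lie_add, lie_add, haab za hza p hp, huab zu hzu q hq]
        abel
      rw [c1, c2, c3] at hk
      rw [c0]
      simp only [map_add, map_sub, LinearMap.add_apply, LinearMap.sub_apply] at hk ⊢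
      -- zero facts
      have z1 : B ⁅p, yu⁆ za = 0 := horth' _ (hbrk p yu) za hza
      have z2 : B ⁅q, ya⁆ za = 0 := horth' _ (hbrk q ya) za hza
      have z3 : B ⁅ya, zu⁆ p = 0 := horth' _ (hbrk ya zu) p hp
      have z4 : B ⁅yu, za⁆ p = 0 := horth' _ (hbrk yu za) p hp
      have z5 : B ⁅za, q⁆ ya = 0 := horth' _ (hbrk za q) ya hya
      have z6 : B ⁅zu, p⁆ ya = 0 := horth' _ (hbrk zu p) ya hya
      -- skew facts
      have s1 : B ⁅q, ya⁆ zu = B ⁅ya, zu⁆ q := by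
        rw [← lie_skew q ya, map_neg, LinearMap.neg_apply, hadskew ya hya q zu,
          neg_neg, hB.symm q ⁅ya, zu⁆]
      have s2 : B ⁅yu, za⁆ q = - B q ⁅za, yu⁆ := by
        rw [← lie_skew yu za, map_neg, LinearMap.neg_apply, hB.symm ⁅za, yu⁆ q]
      have s3 : B ⁅za, q⁆ yu = - B q ⁅za, yu⁆ := hadskew za hza q yu
      have s4 : B ⁅zu, p⁆ yu = B ⁅p, yu⁆ zu := by
        rw [← lie_skew zu p, map_neg, LinearMap.neg_apply, hadskew p hp zu yu,
          neg_neg, hB.symm zu ⁅p, yu⁆]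
      linarith
    have h0 := hnd _ key
    rwa [sub_eq_zero] at h0
  have hDu : ∀ q ∈ u, ∀ y : g, D q y = 0 := by
    intro q hq y
    have := hDval 0 a.zero_mem q hq y
    rwa [zero_add, zero_lie] at this
  have hDa : ∀ p ∈ a, ∀ y : g, D p y = ⁅p, y⁆ := by
    intro p hp y
    have := hDval p hp 0 u.zero_mem y
    rwa [add_zero] at this
  -- CKY with both arguments in u has vanishing left-hand side
  have hcu : ∀ x ∈ u, ∀ y ∈ u, ∀ z : g,
      0 = 2 * B x y * θ z - B y z * θ x - B x z * θ y := by
    intro x hx y hy z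
    have h := hCKY x y z
    rw [hDu x hx (T y), hDu x hx y, hDu y hy (T x), hDu y hy x] at h
    simpa using h
  -- a nontrivial bracket of an a-element with a u-element
  have hex : ∃ p ∈ a, ∃ w ∈ u, ⁅p, w⁆ ≠ 0 := by
    obtain ⟨x0, y0, hxy⟩ := hnonab
    obtain ⟨xa, hxa, xu, hxu, rfl⟩ := hdec x0
    obtain ⟨ya, hya, yu, hyu, rfl⟩ := hdec y0
    have hexp : ⁅xa + xu, ya + yu⁆ = ⁅xa, yu⁆ + -⁅ya, xu⁆ := by
      rw [add_lie, lie_add, lie_add, haab xa hxa ya hya, huab xu hxu yu hyu,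
        ← lie_skew xu ya]
      abel
    by_cases h1 : ⁅xa, yu⁆ = 0
    · refine ⟨ya, hya, xu, hxu, ?_⟩
      intro h2
      rw [hexp, h1, h2] at hxy
      simp at hxy
    · exact ⟨xa, hxa, yu, hyu, h1⟩
  obtain ⟨p0, hp0, w, hw, hb⟩ := hex
  set b : g := ⁅p0, w⁆ with hbdef
  have hbu : b ∈ u := huideal p0 w hw
  have hw0 : w ≠ 0 := by
    intro h
    rw [hbdef, h, lie_zero] at hb
    exact hb rfl
  have hwb : B w b = 0 := by
    have h1 : B b w = - B w b := hadskew p0 hp0 w w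
    have h2 : B b w = B w b := hB.symm b w
    linarith
  -- θ vanishes
  have hwb' : B b w = 0 := by rw [hB.symm]; exact hwb
  have hθw : θ w = 0 := by
    have h := hcu w hw b hbu b
    have hbb : 0 < B b b := hB.posdef b hb
    rw [hwb] at h
    have h2 : B b b * θ w = 0 := by linarith
    rcases mul_eq_zero.mp h2 with h3 | h3
    · exact absurd h3 (ne_of_gt hbb)
    · exact h3
  have hθ : ∀ z : g, θ z = 0 := by
    intro z
    have h := hcu w hw w hw z
    rw [hθw] at h
    have hww : 0 < B w w := hB.posdef w hw0
    have h2 : B w w * θ z = 0 := by linarith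
    rcases mul_eq_zero.mp h2 with h3 | h3
    · exact absurd h3 (ne_of_gt hww)
    · exact h3
  have hθ0 : θ = 0 := by
    ext z
    exact hθ z
  -- Killing-Yano form of the equation
  have hKY : ∀ x y z : g,
      B (D x (T y) - T (D x y)) z + B (D y (T x) - T (D y x)) z = 0 := by
    intro x y z
    have h := hCKY x y z
    rw [hθ x, hθ y, hθ z] at h
    simpa using h
  -- parallel on a × u
  have hP1 : ∀ p ∈ a, ∀ q ∈ u, ⁅p, T q⁆ = T ⁅p, q⁆ := by
    intro p hp q hq
    have key : ∀ z : g, B (⁅p, T q⁆ - T ⁅p, q⁆) z = 0 := by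
      intro z
      have h := hKY p q z
      rw [hDu q hq (T p), hDu q hq p, hDa p hp (T q), hDa p hp q] at h
      simpa using h
    have h0 := hnd _ key
    rwa [sub_eq_zero] at h0
  -- [p, T r] = 0 for p, r ∈ a
  have hP2 : ∀ p ∈ a, ∀ r ∈ a, ⁅p, T r⁆ = 0 := by
    intro p hp r hr
    apply hnd
    intro z
    obtain ⟨za, hza, zu, hzu, rfl⟩ := hdec z
    have e1 : B ⁅p, T r⁆ za = 0 := horth' _ (hbrk p (T r)) za hza
    have e2 : B ⁅p, T r⁆ zu = 0 := by
      rw [hadskew p hp (T r) zu, hT r ⁅p, zu⁆, ← hP1 p hp zu hzu,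
        hB.symm r ⁅p, T zu⁆, hadskew p hp (T zu) r, haab p hp r hr, map_zero]
      simp
    rw [map_add, e1, e2, add_zero]
  -- conclusion
  refine ⟨?_, hθ0⟩
  intro x y
  obtain ⟨xa, hxa, xu, hxu, rfl⟩ := hdec x
  obtain ⟨ya, hya, yu, hyu, rfl⟩ := hdec y
  rw [hDval xa hxa xu hxu (T (ya + yu)), hDval xa hxa xu hxu (ya + yu)]
  rw [map_add, lie_add, lie_add, hP2 xa hxa ya hya, haab xa hxa ya hya,
    hP1 xa hxa yu hyu, map_add, map_zero]
  abel
end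

section
/- Let (𝔤, ⟨·,·⟩) be a metric Lie algebra whose inner product is flat, with orthogonal decomposition 𝔤 = 𝔞 ⊕ 𝔲 (𝔲 an abelian ideal, 𝔞 an abelian subalgebra, ad_x skew-symmetric for x ∈ 𝔞), and let T be a skew-symmetric endomorphism of 𝔤. Then T is a Killing-Yano tensor (and in fact parallel) if and only if [Tx, z] = 0 and ad_x ∘ T = T ∘ ad_x for all x, z ∈ 𝔞. -/
/-- On a metric Lie algebra with flat metric (decomposition `𝔤 = 𝔞 ⊕ 𝔲`),
a skew-symmetric endomorphism `T` is a Killing-Yano tensor (and in fact parallel) iff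
`[Tx, z] = 0` and `ad_x ∘ T = T ∘ ad_x` for all `x, z ∈ 𝔞`. -/
theorem flat_ky_characterization {g : Type*} [LieRing g] [LieAlgebra ℝ g]
    [FiniteDimensional ℝ g]
    (B : g →ₗ[ℝ] g →ₗ[ℝ] ℝ) (hB : IsInnerProduct B)
    (a u : Submodule ℝ g)
    (horth : ∀ x ∈ a, ∀ y ∈ u, B x y = 0)
    (hsum : a ⊔ u = ⊤)
    (huideal : ∀ x : g, ∀ y ∈ u, ⁅x, y⁆ ∈ u)
    (huab : ∀ x ∈ u, ∀ y ∈ u, ⁅x, y⁆ = (0 : g))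
    (haab : ∀ x ∈ a, ∀ y ∈ a, ⁅x, y⁆ = (0 : g))
    (hadskew : ∀ x ∈ a, ∀ y z : g, B ⁅x, y⁆ z = - B y ⁅x, z⁆)
    (D : g → g → g) (hD : IsLeviCivita B D)
    (T : g →ₗ[ℝ] g) (hT : IsSkewSymmetric B T) :
    (IsKY B D T ↔
      (∀ x ∈ a, ∀ z ∈ a, ⁅T x, z⁆ = (0 : g)) ∧
      (∀ x ∈ a, ∀ y : g, ⁅x, T y⁆ = T ⁅x, y⁆)) ∧
    (IsKY B D T → IsParallelT D T) := by
  classical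
  -- nondegeneracy of B
  have hnd : ∀ v : g, (∀ z : g, B v z = 0) → v = 0 := by
    intro v hv
    by_contra h
    exact (hB.posdef v h).ne' (hv v)
  have hmem0 : ∀ v : g, v ∈ a → v ∈ u → v = 0 := by
    intro v hva hvu
    by_contra h
    exact (hB.posdef v h).ne' (horth v hva v hvu)
  -- decomposition
  have hdecomp : ∀ x : g, ∃ xa, xa ∈ a ∧ x - xa ∈ u := by
    intro x
    have hx : x ∈ a ⊔ u := by rw [hsum]; trivial
    rcases Submodule.mem_sup.mp hx with ⟨xa, hxa, xu, hxu, hxx⟩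
    exact ⟨xa, hxa, by rw [← hxx]; simpa using hxu⟩
  choose P hPa hPu using hdecomp
  have hPid : ∀ x ∈ a, P x = x := by
    intro x hx
    have h0 : x - P x = 0 := hmem0 _ (Submodule.sub_mem a hx (hPa x)) (hPu x)
    have := sub_eq_zero.mp h0
    exact this.symm
  have hP0 : ∀ x ∈ u, P x = 0 := by
    intro x hx
    have h0 : P x ∈ u := by
      have := Submodule.sub_mem u hx (hPu x)
      simpa using this
    exact hmem0 _ (hPa x) h0
  -- bracket decomposition
  have hbrackets : ∀ x y : g, ⁅x, y⁆ = ⁅P x, y⁆ - ⁅P y, x⁆ := by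
    intro x y
    have h1 : ⁅x - P x, y - P y⁆ = (0 : g) := huab _ (hPu x) _ (hPu y)
    have h2 : ⁅P x, P y⁆ = (0 : g) := haab _ (hPa x) _ (hPa y)
    have h3 : ⁅x, P y⁆ = - ⁅P y, x⁆ := by rw [← lie_skew]
    calc ⁅x, y⁆ = ⁅x - P x, y - P y⁆ + ⁅x, P y⁆ + ⁅P x, y⁆ - ⁅P x, P y⁆ := by
          simp only [lie_sub, sub_lie]; abel
      _ = ⁅P x, y⁆ - ⁅P y, x⁆ := by rw [h1, h2, h3]; abel
  -- formula for the Levi-Civita connection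
  have hDf : ∀ x y : g, D x y = ⁅P x, y⁆ := by
    intro x y
    have key : ∀ z : g, B (D x y - ⁅P x, y⁆) z = 0 := by
      intro z
      have hk := hD x y z
      rw [hbrackets x y, hbrackets y z, hbrackets z x] at hk
      simp only [map_sub, LinearMap.sub_apply] at hk
      have s1 : B ⁅P y, x⁆ z = - B x ⁅P y, z⁆ := hadskew (P y) (hPa y) x z
      have s2 : B ⁅P z, y⁆ x = - B y ⁅P z, x⁆ := hadskew (P z) (hPa z) y x
      have s3 : B ⁅P x, z⁆ y = - B z ⁅P x, y⁆ := hadskew (P x) (hPa x) z y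
      have m1 : B x ⁅P y, z⁆ = B ⁅P y, z⁆ x := hB.symm _ _
      have m2 : B y ⁅P z, x⁆ = B ⁅P z, x⁆ y := hB.symm _ _
      have m3 : B z ⁅P x, y⁆ = B ⁅P x, y⁆ z := hB.symm _ _
      rw [map_sub, LinearMap.sub_apply]
      linarith
    have := hnd _ key
    exact sub_eq_zero.mp this
  -- reformulation of the KY condition
  have hKY_iff : IsKY B D T ↔
      ∀ x y : g, (⁅P x, T y⁆ - T ⁅P x, y⁆) + (⁅P y, T x⁆ - T ⁅P y, x⁆) = 0 := by
    constructor
    · intro h x y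
      apply hnd
      intro z
      have h1 := h x y z
      simp only [hDf, LinearMap.zero_apply, mul_zero, sub_zero] at h1
      rw [map_add, LinearMap.add_apply]
      linarith
    · intro h x y z
      have h1 := h x y
      show B (D x (T y) - T (D x y)) z + B (D y (T x) - T (D y x)) z =
        2 * B x y * (0 : g →ₗ[ℝ] ℝ) z - B y z * (0 : g →ₗ[ℝ] ℝ) x - B x z * (0 : g →ₗ[ℝ] ℝ) y
      simp only [hDf, LinearMap.zero_apply, mul_zero]
      rw [← LinearMap.add_apply, ← map_add, h1]
      simp
  -- forward direction: derive the two conditions from KY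
  have hforward : IsKY B D T →
      (∀ x ∈ a, ∀ z ∈ a, ⁅T x, z⁆ = (0 : g)) ∧
      (∀ x ∈ a, ∀ y : g, ⁅x, T y⁆ = T ⁅x, y⁆) := by
    intro hKY
    have hk := hKY_iff.mp hKY
    have hiiu : ∀ x ∈ a, ∀ y ∈ u, ⁅x, T y⁆ = T ⁅x, y⁆ := by
      intro x hx y hy
      have h1 := hk x y
      rw [hPid x hx, hP0 y hy] at h1
      simp only [zero_lie, map_zero, sub_zero, sub_self, add_zero] at h1
      exact sub_eq_zero.mp h1
    have hB0 : ∀ x ∈ a, ∀ y ∈ a, ⁅x, T y⁆ = (0 : g) := by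
      intro x hx y hy
      apply hnd
      intro w
      have e1 : B ⁅x, T y⁆ w = - B (T y) ⁅x, w⁆ := hadskew x hx (T y) w
      have e2 : B (T y) ⁅x, w⁆ = - B y (T ⁅x, w⁆) := hT y ⁅x, w⁆
      have e3 : ⁅x, w⁆ = ⁅x, w - P w⁆ := by
        rw [lie_sub, haab x hx _ (hPa w), sub_zero]
      have e4 : T ⁅x, w - P w⁆ = ⁅x, T (w - P w)⁆ := (hiiu x hx _ (hPu w)).symm
      have e5 : B y ⁅x, T (w - P w)⁆ = B ⁅x, T (w - P w)⁆ y := hB.symm _ _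
      have e6 : B ⁅x, T (w - P w)⁆ y = - B (T (w - P w)) ⁅x, y⁆ := hadskew x hx _ y
      have e7 : ⁅x, y⁆ = (0 : g) := haab x hx y hy
      rw [e1, e2, e3, e4, e5, e6, e7]
      simp
    constructor
    · intro x hx z hz
      rw [← lie_skew, hB0 z hz x hx, neg_zero]
    · intro x hx y
      calc ⁅x, T y⁆ = ⁅x, T (P y)⁆ + ⁅x, T (y - P y)⁆ := by
            have hy : P y + (y - P y) = y := by abel
            rw [← lie_add, ← map_add, hy]
        _ = T ⁅x, y⁆ := by
            rw [hB0 x hx _ (hPa y), zero_add, hiiu x hx _ (hPu y), lie_sub,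
              haab x hx _ (hPa y), sub_zero]
  -- backward direction
  have hback : ((∀ x ∈ a, ∀ z ∈ a, ⁅T x, z⁆ = (0 : g)) ∧
      (∀ x ∈ a, ∀ y : g, ⁅x, T y⁆ = T ⁅x, y⁆)) → IsKY B D T := by
    rintro ⟨-, h2⟩
    apply hKY_iff.mpr
    intro x y
    rw [h2 (P x) (hPa x) y, h2 (P y) (hPa y) x, sub_self, sub_self, add_zero]
  refine ⟨⟨hforward, hback⟩, ?_⟩
  intro hKY x y
  have h2 := (hforward hKY).2
  rw [hDf, hDf, h2 (P x) (hPa x) y, sub_self]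
end

section
/- Let (𝔤, ⟨·,·⟩) be an almost abelian metric Lie algebra (𝔤 contains an abelian ideal of codimension one). Then every Killing-Yano tensor T on (𝔤, ⟨·,·⟩) is parallel. -/
open RealInnerProductSpace

section KeyLemma

variable {E : Type*} [NormedAddCommGroup E] [InnerProductSpace ℝ E]

noncomputable def qf (A : E →ₗ[ℝ] E) (x w : E) : ℝ := ⟪A x, w⟫ + ⟪A w, x⟫

noncomputable def rf (A T : E →ₗ[ℝ] E) (y z : E) : ℝ :=
  ⟪A (T y), z⟫ - ⟪A z, T y⟫ + ⟪A y, T z⟫ - ⟪A (T z), y⟫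

noncomputable def GQ (e₀ : E) (A T : E →ₗ[ℝ] E) (x y z : E) : ℝ :=
  ⟪x, e₀⟫ * rf A T y z + ⟪y, T e₀⟫ * qf A x z - ⟪y, e₀⟫ * qf A x (T z)
    + ⟪z, e₀⟫ * qf A x (T y) - ⟪z, T e₀⟫ * qf A x y

noncomputable def projC (e₀ : E) : E →ₗ[ℝ] E where
  toFun x := x - ⟪x, e₀⟫ • e₀
  map_add' x y := by simp [inner_add_left, add_smul]; abel
  map_smul' c x := by simp [inner_smul_left, smul_smul]; module

lemma projC_apply (e₀ x : E) : projC e₀ x = x - ⟪x, e₀⟫ • e₀ := rfl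

lemma skew_of_trace_sq_zero [FiniteDimensional ℝ E] (M : E →ₗ[ℝ] E)
    (hsk : ∀ x y : E, ⟪M x, y⟫ = -⟪x, M y⟫)
    (htr : LinearMap.trace ℝ E (M * M) = 0) : M = 0 := by
  let b := stdOrthonormalBasis ℝ E
  have htrace : LinearMap.trace ℝ E (M * M) = ∑ i, ⟪b i, M (M (b i))⟫ := by
    rw [LinearMap.trace_eq_matrix_trace ℝ b.toBasis, Matrix.trace]
    congr 1
    ext i
    rw [Matrix.diag_apply, LinearMap.toMatrix_apply, b.coe_toBasis,
      b.coe_toBasis_repr_apply, b.repr_apply_apply]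
    rfl
  have hterm : ∀ i, ⟪b i, M (M (b i))⟫ = -⟪M (b i), M (b i)⟫ := by
    intro i
    rw [real_inner_comm, hsk, real_inner_comm]
  have hsum : ∑ i, ⟪M (b i), M (b i)⟫ = (0 : ℝ) := by
    have := htr
    rw [htrace] at this
    simp only [hterm] at this
    rw [Finset.sum_neg_distrib] at this
    linarith
  have hzero : ∀ i, M (b i) = 0 := by
    intro i
    have h1 : ∀ i ∈ Finset.univ, (0:ℝ) ≤ ⟪M (b i), M (b i)⟫ := fun i _ => real_inner_self_nonneg
    have := (Finset.sum_eq_zero_iff_of_nonneg h1).mp hsum i (Finset.mem_univ i)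
    exact inner_self_eq_zero.mp this
  apply b.toBasis.ext
  intro i
  rw [b.coe_toBasis]
  simp [hzero i]

theorem GQ_eq_zero [FiniteDimensional ℝ E] (e₀ : E) (he : ⟪e₀, e₀⟫ = 1)
    (A T : E →ₗ[ℝ] E) (hAe : A e₀ = 0) (hAp : ∀ x : E, ⟪A x, e₀⟫ = 0)
    (hT : ∀ x y : E, ⟪T x, y⟫ = -⟪x, T y⟫)
    (hG : ∀ x y z : E, GQ e₀ A T x y z + GQ e₀ A T y x z = 0) :
    ∀ x y z : E, GQ e₀ A T x y z = 0 := by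
  -- basic facts
  have hqsymm : ∀ x w : E, qf A x w = qf A w x := by
    intro x w; simp only [qf]; ring
  have hqe : ∀ x : E, qf A x e₀ = 0 := by
    intro x; simp [qf, hAe, hAp]
  have hqe' : ∀ x : E, qf A e₀ x = 0 := by
    intro x; rw [hqsymm]; exact hqe x
  have hβe : ⟪e₀, T e₀⟫ = 0 := by
    have := hT e₀ e₀
    rw [real_inner_comm] at this
    linarith
  have hσv : ⟪T e₀, e₀⟫ = 0 := by rw [real_inner_comm]; exact hβe
  -- the relations extracted from hG
  have hrfe : ∀ z : E, rf A T e₀ z = 0 := by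
    intro z
    have h := hG e₀ e₀ z
    simp only [GQ, he, hqe, hqe', hβe] at h
    linarith [h]
  have hRel1 : ∀ z : E, ⟪A (T e₀), z⟫ = ⟪A z, T e₀⟫ := by
    intro z
    have h := hrfe z
    simp only [rf, hAe, inner_zero_left, hAp] at h
    linarith
  have hRel2 : ∀ y z : E, rf A T y z = qf A y (T z) - ⟪z, e₀⟫ * qf A y (T e₀) := by
    intro y z
    have h := hG e₀ y z
    simp only [GQ, he, hqe, hqe', hβe, hrfe] at h
    linarith [h]
  have hRel4 : ∀ x y : E, qf A x (T y) + qf A y (T x)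
      = ⟪x, e₀⟫ * qf A y (T e₀) + ⟪y, e₀⟫ * qf A x (T e₀) := by
    intro x y
    have h := hG x y e₀
    have hrfy : rf A T y e₀ = 0 := by
      rw [hRel2 y e₀, he]; ring
    have hrfx : rf A T x e₀ = 0 := by
      rw [hRel2 x e₀, he]; ring
    simp only [GQ, he, hqe, hqe', hβe, hσv, hrfy, hrfx] at h
    linarith [h]
  have hPhi : ∀ x y z : E, ⟪y, T e₀⟫ * qf A x z + ⟪x, T e₀⟫ * qf A y z
      = 2 * ⟪z, T e₀⟫ * qf A x y := by
    intro x y z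
    have h := hG x y z
    simp only [GQ] at h
    rw [hqsymm y x] at h
    linear_combination h - ⟪x, e₀⟫ * hRel2 y z - ⟪y, e₀⟫ * hRel2 x z - ⟪z, e₀⟫ * hRel4 x y
  have hH1 : ∀ x y z : E, ⟪y, T e₀⟫ * qf A x z = ⟪z, T e₀⟫ * qf A x y := by
    intro x y z
    have h1 := hPhi x y z
    have h2 := hPhi y z x
    rw [hqsymm y x, hqsymm z x] at h2
    linear_combination (2/3 : ℝ) * h1 + (1/3 : ℝ) * h2
  -- projection and tau
  set P : E →ₗ[ℝ] E := projC e₀ with hPdef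
  have hPapp : ∀ x : E, P x = x - ⟪x, e₀⟫ • e₀ := fun x => rfl
  have hPe : P e₀ = 0 := by rw [hPapp, he]; simp
  have hPsym : ∀ x y : E, ⟪P x, y⟫ = ⟪x, P y⟫ := by
    intro x y
    rw [hPapp, hPapp]
    rw [inner_sub_left, inner_sub_right, real_inner_smul_left, real_inner_smul_right]
    rw [real_inner_comm e₀ y]
    ring
  set τ : E →ₗ[ℝ] E := P ∘ₗ T ∘ₗ P with hτdef
  have hτapp : ∀ x : E, τ x = P (T (P x)) := fun x => rfl
  have hτsk : ∀ x y : E, ⟪τ x, y⟫ = -⟪x, τ y⟫ := by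
    intro x y
    rw [hτapp, hτapp, hPsym, hT, hPsym]
  have hτval : ∀ y : E, τ y = T y - ⟪y, e₀⟫ • T e₀ + ⟪y, T e₀⟫ • e₀ := by
    intro y
    have h1 : T (P y) = T y - ⟪y, e₀⟫ • T e₀ := by rw [hPapp]; simp
    have h2 : ⟪T (P y), e₀⟫ = -⟪y, T e₀⟫ := by
      rw [h1, inner_sub_left, real_inner_smul_left, hσv, hT y e₀]; ring
    rw [hτapp y, hPapp (T (P y)), h2, h1]
    module
  have hTdec : ∀ y : E, T y = τ y + ⟪y, e₀⟫ • T e₀ - ⟪y, T e₀⟫ • e₀ := by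
    intro y; rw [hτval y]; module
  have hATexp : ∀ w z' : E, ⟪A (T w), z'⟫ = ⟪A (τ w), z'⟫ + ⟪w, e₀⟫ * ⟪A (T e₀), z'⟫ := by
    intro w z'
    rw [hTdec w]
    simp [inner_add_left, inner_sub_left, real_inner_smul_left, hAe]
  have hATexp2 : ∀ z' w : E, ⟪A z', T w⟫ = ⟪A z', τ w⟫ + ⟪w, e₀⟫ * ⟪A z', T e₀⟫ := by
    intro z' w
    rw [hTdec w]
    simp [inner_add_right, inner_sub_right, real_inner_smul_right, hAp]
  have hqexp : ∀ x y : E, qf A x (T y) = qf A x (τ y) + ⟪y, e₀⟫ * qf A x (T e₀) := by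
    intro x y
    simp only [qf]
    rw [hATexp2 x y, hATexp y x]
    ring
  have R1scalar : ∀ x y : E, qf A x (τ y) + qf A y (τ x) = 0 := by
    intro x y
    linear_combination hRel4 x y - hqexp x y - hqexp y x
  have RBτ : ∀ y z : E, ⟪A (τ y), z⟫ - ⟪A z, τ y⟫ - 2 * ⟪A (τ z), y⟫ = 0 := by
    intro y z
    have h := hRel2 y z
    simp only [rf, qf] at h
    rw [hATexp y z, hATexp2 z y, hATexp2 y z, hATexp z y] at h
    linear_combination h - ⟪y, e₀⟫ * hRel1 z + ⟪z, e₀⟫ * hRel1 y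
  -- operators
  set A' : E →ₗ[ℝ] E := LinearMap.adjoint A with hA'def
  have hadj : ∀ x y : E, ⟪A' x, y⟫ = ⟪x, A y⟫ := fun x y => LinearMap.adjoint_inner_left A y x
  set S : E →ₗ[ℝ] E := (1/2 : ℝ) • (A + A') with hSdef
  set K : E →ₗ[ℝ] E := (1/2 : ℝ) • (A - A') with hKdef
  have hSsc : ∀ x y : E, ⟪S x, y⟫ = (⟪A x, y⟫ + ⟪x, A y⟫)/2 := by
    intro x y
    rw [hSdef]
    simp only [LinearMap.smul_apply, LinearMap.add_apply, real_inner_smul_left,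
      inner_add_left, hadj]
    ring
  have hKsc : ∀ x y : E, ⟪K x, y⟫ = (⟪A x, y⟫ - ⟪x, A y⟫)/2 := by
    intro x y
    rw [hKdef]
    simp only [LinearMap.smul_apply, LinearMap.sub_apply, real_inner_smul_left,
      inner_sub_left, hadj]
    ring
  have hext : ∀ N : E →ₗ[ℝ] E, (∀ x y : E, ⟪N x, y⟫ = 0) → N = 0 := by
    intro N h
    ext x
    have := h x (N x)
    simp only [LinearMap.zero_apply]
    exact inner_self_eq_zero.mp this
  have R1op : S ∘ₗ τ = τ ∘ₗ S := by
    have h0 : ∀ x y : E, ⟪(S ∘ₗ τ - τ ∘ₗ S) x, y⟫ = 0 := by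
      intro x y
      simp only [LinearMap.sub_apply, LinearMap.comp_apply, inner_sub_left]
      have e2 : ⟪τ (S x), y⟫ = -⟪S x, τ y⟫ := hτsk _ _
      have e4 := R1scalar x y
      simp only [qf] at e4
      rw [hSsc, e2, hSsc]
      rw [real_inner_comm (A y) (τ x), real_inner_comm (A (τ y)) x]
      linarith [e4]
    exact sub_eq_zero.mp (hext _ h0)
  have R2op : A ∘ₗ τ = τ ∘ₗ K := by
    have h0 : ∀ x y : E, ⟪(A ∘ₗ τ - τ ∘ₗ K) x, y⟫ = 0 := by
      intro x y
      simp only [LinearMap.sub_apply, LinearMap.comp_apply, inner_sub_left]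
      have e2 : ⟪τ (K x), y⟫ = -⟪K x, τ y⟫ := hτsk _ _
      rw [e2, hKsc]
      rw [real_inner_comm (A (τ y)) x]
      linarith [RBτ y x]
    exact sub_eq_zero.mp (hext _ h0)
  set M : E →ₗ[ℝ] E := S ∘ₗ τ with hMdef
  have hSKA : S + K = A := by
    rw [hSdef, hKdef]
    ext x
    simp only [LinearMap.add_apply, LinearMap.smul_apply, LinearMap.sub_apply]
    module
  have hM2 : M = τ * K - K * τ := by
    have h1 : M = A ∘ₗ τ - K ∘ₗ τ := by
      rw [hMdef, ← hSKA]
      ext x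
      simp only [LinearMap.sub_apply, LinearMap.comp_apply, LinearMap.add_apply]
      abel
    rw [h1, R2op]
    rfl
  have hMτ : M * τ = τ * M := by
    have h1 : M * τ = (τ ∘ₗ S) * τ := by rw [R1op]
    rw [h1]
    have : (τ ∘ₗ S) * τ = τ * (S * τ) := by
      rw [Module.End.mul_eq_comp, Module.End.mul_eq_comp, Module.End.mul_eq_comp, LinearMap.comp_assoc]
    rw [this]
    rfl
  have htr : LinearMap.trace ℝ E (M * M) = 0 := by
    have h1 : M * M = τ * (K * M) - K * (τ * M) := by
      rw [hM2]
      noncomm_ring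
    rw [h1, map_sub]
    have h2 : LinearMap.trace ℝ E (τ * (K * M)) = LinearMap.trace ℝ E (K * (M * τ)) := by
      rw [LinearMap.trace_mul_comm]
      congr 1
    rw [h2, hMτ]
    exact sub_self _
  have hMsk : ∀ x y : E, ⟪M x, y⟫ = -⟪x, M y⟫ := by
    intro x y
    have hSsym : ∀ p q : E, ⟪S p, q⟫ = ⟪p, S q⟫ := by
      intro p q
      rw [hSsc, real_inner_comm (S q) p, hSsc]
      rw [real_inner_comm (A p) q, real_inner_comm p (A q)]
      ring
    have h1 : ⟪M x, y⟫ = ⟪S (τ x), y⟫ := rfl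
    have h2 : τ (S y) = M y := by
      have : (τ ∘ₗ S) y = M y := by rw [← R1op]
      exact this
    rw [h1, hSsym, hτsk, h2]
  have Mzero : M = 0 := skew_of_trace_sq_zero M hMsk htr
  have hqτ0 : ∀ x y : E, qf A x (τ y) = 0 := by
    intro x y
    have h1 : ⟪M y, x⟫ = 0 := by rw [Mzero]; simp
    have h2 : ⟪M y, x⟫ = (⟪A (τ y), x⟫ + ⟪τ y, A x⟫)/2 := hSsc _ _
    simp only [qf]
    rw [real_inner_comm (τ y) (A x)]
    linarith [h1, h2.symm.trans h1]
  -- final assembly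
  intro x y z
  have a1 : qf A y (T z) = ⟪z, e₀⟫ * qf A y (T e₀) := by
    rw [hqexp y z, hqτ0]; ring
  have a2 : qf A x (T z) = ⟪z, e₀⟫ * qf A x (T e₀) := by
    rw [hqexp x z, hqτ0]; ring
  have a3 : qf A x (T y) = ⟪y, e₀⟫ * qf A x (T e₀) := by
    rw [hqexp x y, hqτ0]; ring
  simp only [GQ]
  rw [hRel2 y z, a1, a2, a3]
  linear_combination hH1 x y z

end KeyLemma


/-- On an almost abelian metric Lie algebra, every Killing-Yano tensor is
parallel. -/
theorem almost_abelian_ky_is_parallel {g : Type*} [LieRing g] [LieAlgebra ℝ g]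
    [FiniteDimensional ℝ g]
    (B : g →ₗ[ℝ] g →ₗ[ℝ] ℝ) (hB : IsInnerProduct B)
    (u : Submodule ℝ g)
    (huideal : ∀ x : g, ∀ y ∈ u, ⁅x, y⁆ ∈ u)
    (huab : ∀ x ∈ u, ∀ y ∈ u, ⁅x, y⁆ = (0 : g))
    (hcodim : Module.finrank ℝ u + 1 = Module.finrank ℝ g)
    (D : g → g → g) (hD : IsLeviCivita B D)
    (T : g →ₗ[ℝ] g) (hT : IsSkewSymmetric B T) (hKY : IsKY B D T) :
    IsParallelT D T := by
  letI icore : InnerProductSpace.Core ℝ g :=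
    { inner := fun x y => B x y
      conj_inner_symm := by intro x y; simpa using hB.symm y x
      re_inner_nonneg := by
        intro x
        rcases eq_or_ne x 0 with h | h
        · simp [h]
        · simpa using (hB.posdef x h).le
      add_left := by intro x y z; simp
      smul_left := by intro x y r; simp
      definite := by
        intro x hx
        by_contra h
        exact (hB.posdef x h).ne' hx }
  letI instN : NormedAddCommGroup g := icore.toNormedAddCommGroup
  letI instIP : InnerProductSpace ℝ g := InnerProductSpace.ofCore icore.toCore
  have hinner : ∀ x y : g, (inner ℝ x y : ℝ) = B x y := fun _ _ => rfl
  -- get e₀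
  have hfr : Module.finrank ℝ (Submodule.orthogonal u) = 1 := by
    have h := Submodule.finrank_add_finrank_orthogonal u
    omega
  have hne : (Submodule.orthogonal u) ≠ ⊥ := by
    intro hbot
    rw [hbot, finrank_bot] at hfr
    omega
  obtain ⟨w, hwmem, hwne⟩ := Submodule.exists_mem_ne_zero_of_ne_bot hne
  set e₀ : g := (‖w‖⁻¹ : ℝ) • w with he₀def
  have hnw : ‖w‖ ≠ 0 := norm_ne_zero_iff.mpr hwne
  have he₀ne : e₀ ≠ 0 := by
    rw [he₀def]
    exact smul_ne_zero (inv_ne_zero hnw) hwne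
  have he : (inner ℝ e₀ e₀ : ℝ) = 1 := by
    rw [he₀def, real_inner_smul_left, real_inner_smul_right, real_inner_self_eq_norm_mul_norm]
    field_simp
  have he₀mem : e₀ ∈ Submodule.orthogonal u := Submodule.smul_mem _ _ hwmem
  have hu0 : ∀ a ∈ u, (inner ℝ a e₀ : ℝ) = 0 :=
    (Submodule.mem_orthogonal u e₀).mp he₀mem
  have hspan : Submodule.span ℝ {e₀} = Submodule.orthogonal u := by
    apply Submodule.eq_of_le_of_finrank_le
    · rw [Submodule.span_singleton_le_iff_mem]
      exact he₀mem
    · rw [hfr, finrank_span_singleton he₀ne]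
  have hπu : ∀ x : g, x - (inner ℝ x e₀ : ℝ) • e₀ ∈ u := by
    intro x
    rw [← Submodule.orthogonal_orthogonal u]
    rw [Submodule.mem_orthogonal]
    intro v hv
    rw [← hspan] at hv
    obtain ⟨c, rfl⟩ := Submodule.mem_span_singleton.mp hv
    rw [real_inner_smul_left, inner_sub_right, real_inner_smul_right, he,
      real_inner_comm e₀ x]
    ring
  -- the operator A = ad(e₀)
  set 𝒜 : g →ₗ[ℝ] g :=
    { toFun := fun x => ⁅e₀, x⁆
      map_add' := fun a b => lie_add e₀ a b
      map_smul' := fun c a => by simp } with h𝒜def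
  have h𝒜app : ∀ x : g, 𝒜 x = ⁅e₀, x⁆ := fun _ => rfl
  have hAe : 𝒜 e₀ = 0 := lie_self e₀
  have hAmem : ∀ x : g, 𝒜 x ∈ u := by
    intro x
    have h1 : 𝒜 x = ⁅e₀, x - (inner ℝ x e₀ : ℝ) • e₀⁆ := by
      rw [h𝒜app]
      simp [lie_sub, lie_smul, lie_self]
    rw [h1]
    exact huideal e₀ _ (hπu x)
  have hAp : ∀ x : g, (inner ℝ (𝒜 x) e₀ : ℝ) = 0 := fun x => hu0 _ (hAmem x)
  -- bracket decomposition
  have hbrk : ∀ x y : g,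
      ⁅x, y⁆ = (inner ℝ x e₀ : ℝ) • 𝒜 y - (inner ℝ y e₀ : ℝ) • 𝒜 x := by
    intro x y
    have h0 := huab _ (hπu x) _ (hπu y)
    simp only [sub_lie, lie_sub, smul_lie, lie_smul, lie_self, smul_zero, sub_zero,
      smul_smul] at h0
    rw [h𝒜app, h𝒜app]
    have h1 : ⁅x, e₀⁆ = -⁅e₀, x⁆ := by rw [← lie_skew]
    rw [h1] at h0
    rw [sub_sub, sub_eq_zero] at h0
    rw [h0, smul_neg]
    abel
  have hT' : ∀ x y : g, (inner ℝ (T x) y : ℝ) = -(inner ℝ x (T y) : ℝ) := fun x y => hT x y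
  have hGform : ∀ x y z : g, 2 * B (D x (T y) - T (D x y)) z = GQ e₀ 𝒜 T x y z := by
    intro x y z
    have k1 := hD x (T y) z
    have k2 := hD x y (T z)
    have hTD : B (T (D x y)) z = - B (D x y) (T z) := hT _ _
    have hL : B (D x (T y) - T (D x y)) z = B (D x (T y)) z - B (T (D x y)) z := by
      simp [map_sub]
    rw [hbrk x (T y), hbrk (T y) z, hbrk z x] at k1
    rw [hbrk x y, hbrk y (T z), hbrk (T z) x] at k2
    simp only [map_sub, map_smul, LinearMap.sub_apply, LinearMap.smul_apply,
      smul_eq_mul, hinner] at k1 k2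
    have hσTy : B (T y) e₀ = - B y (T e₀) := hT y e₀
    have hσTz : B (T z) e₀ = - B z (T e₀) := hT z e₀
    rw [hσTy] at k1
    rw [hσTz] at k2
    simp only [GQ, qf, rf, hinner]
    rw [hL, hTD]
    linear_combination k1 + k2
  have hGsk : ∀ x y z : g, GQ e₀ 𝒜 T x y z + GQ e₀ 𝒜 T y x z = 0 := by
    intro x y z
    have h := hKY x y z
    simp only [LinearMap.zero_apply, mul_zero, zero_mul, sub_zero] at h
    linarith [hGform x y z, hGform y x z, h]
  have hkey := GQ_eq_zero e₀ he 𝒜 T hAe hAp hT' hGsk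
  intro x y
  have hzero : ∀ z : g, B (D x (T y) - T (D x y)) z = 0 := by
    intro z
    have h := hkey x y z
    linarith [hGform x y z]
  by_contra hne
  exact (hB.posdef _ hne).ne' (hzero _)
end

section
/- Let (𝔤, ⟨·,·⟩) be a metric Lie algebra admitting a strict conformal Killing-Yano tensor with associated vector ξ. If the center z(𝔤) of 𝔤 has dimension strictly greater than 1, then ξ is orthogonal to z(𝔤). -/
/-- If a metric Lie algebra admits a strict CKY tensor with associated
vector `ξ` and `dim z(𝔤) > 1`, then `ξ` is orthogonal to the center `z(𝔤)`. -/
theorem strict_cky_xi_orthogonal_center {g : Type*} [LieRing g] [LieAlgebra ℝ g]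
    [FiniteDimensional ℝ g]
    (B : g →ₗ[ℝ] g →ₗ[ℝ] ℝ) (hB : IsInnerProduct B)
    (D : g → g → g) (hD : IsLeviCivita B D)
    (T : g →ₗ[ℝ] g) (hT : IsSkewSymmetric B T)
    (θ : g →ₗ[ℝ] ℝ) (hCKY : IsCKYWith B D T θ) (hθ : θ ≠ 0)
    (ξ : g) (hξ : ∀ x : g, θ x = B ξ x)
    (hcenter : 1 < Module.finrank ℝ (LieAlgebra.center ℝ g)) :
    ∀ z ∈ LieAlgebra.center ℝ g, B ξ z = 0 := by
  classical
  have cent : ∀ {a : g}, a ∈ LieAlgebra.center ℝ g → ∀ x : g, ⁅x, a⁆ = 0 ∧ ⁅a, x⁆ = 0 := by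
    intro a ha x
    have h1 : ⁅x, a⁆ = 0 := (LieModule.mem_maxTrivSubmodule ℝ g g a).mp ha x
    exact ⟨h1, by rw [← lie_skew, h1, neg_zero]⟩
  have hDzero : ∀ {a : g}, a ∈ LieAlgebra.center ℝ g → ∀ b c : g, ⁅b, c⁆ = 0 →
      B (D a b) c = 0 := by
    intro a ha b c hbc
    have hk := hD a b c
    rw [(cent ha b).2, hbc, (cent ha c).1] at hk
    simp only [map_zero, LinearMap.zero_apply] at hk
    linarith
  have key : ∀ z ∈ LieAlgebra.center ℝ g, ∀ w ∈ LieAlgebra.center ℝ g,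
      ∀ u ∈ LieAlgebra.center ℝ g,
      2 * B z w * θ u - B w u * θ z - B z u * θ w = 0 := by
    intro z hz w hw u hu
    have h := hCKY z w u
    have h1 : B (D z (T w)) u = 0 := hDzero hz (T w) u ((cent hu (T w)).1)
    have h2 : B (T (D z w)) u = 0 := by
      rw [hT (D z w) u, hDzero hz w (T u) ((cent hw (T u)).2), neg_zero]
    have h3 : B (D w (T z)) u = 0 := hDzero hw (T z) u ((cent hu (T z)).1)
    have h4 : B (T (D w z)) u = 0 := by
      rw [hT (D w z) u, hDzero hw z (T u) ((cent hz (T u)).2), neg_zero]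
    rw [map_sub, map_sub] at h
    simp only [LinearMap.sub_apply] at h
    rw [h1, h2, h3, h4] at h
    linarith
  intro w0 hw0
  rw [← hξ]
  by_contra hne
  have hw0ne : w0 ≠ 0 := by rintro rfl; simp at hne
  -- find a nonzero central element orthogonal to w0
  set C := LieAlgebra.center ℝ g with hC
  let f : C →ₗ[ℝ] ℝ := (B.flip w0).comp ((C : Submodule ℝ g).subtype)
  have hrange : Module.finrank ℝ (LinearMap.range f) ≤ 1 :=
    (Submodule.finrank_le _).trans (by simp)
  have hsum := LinearMap.finrank_range_add_finrank_ker f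
  have hker : 0 < Module.finrank ℝ (LinearMap.ker f) := by omega
  have : Nontrivial (LinearMap.ker f) := Module.finrank_pos_iff.mp hker
  obtain ⟨zz, hzz⟩ := exists_ne (0 : LinearMap.ker f)
  set z0 : g := ((zz : C) : g) with hz0
  have hz0mem : z0 ∈ C := (zz : C).2
  have hz0ne : z0 ≠ 0 := by
    intro h
    apply hzz
    have : (zz : C) = 0 := Subtype.ext h
    exact Subtype.ext this
  have hz0orth : B z0 w0 = 0 := by
    have h : f (zz : C) = 0 := zz.2
    rw [show f (zz : C) = B z0 w0 from rfl] at h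
    exact h
  have k1 := key z0 hz0mem w0 hw0 w0 hw0
  have hθz0 : θ z0 = 0 := by
    have hpos : 0 < B w0 w0 := hB.posdef w0 hw0ne
    rw [hz0orth] at k1
    have : B w0 w0 * θ z0 = 0 := by linarith
    rcases mul_eq_zero.mp this with h | h
    · exact absurd h (ne_of_gt hpos)
    · exact h
  have k2 := key w0 hw0 z0 hz0mem z0 hz0mem
  rw [hθz0] at k2
  have : B z0 z0 * θ w0 = 0 := by linarith
  rcases mul_eq_zero.mp this with h | h
  · exact absurd h (ne_of_gt (hB.posdef z0 hz0ne))
  · exact hne h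
end

section
/- Let (𝔤, ⟨·,·⟩) be a 5-dimensional metric Lie algebra whose center z(𝔤) has dimension 3. Then (𝔤, ⟨·,·⟩) does not admit any strict conformal Killing-Yano tensor. -/
/-! Since `g ⧸ z(g)` is 2-dimensional, `[g, g]` is spanned by a single vector `w`. The
3-dimensional center then contains some `c ≠ 0` with `⟨w, c⟩ = 0` and `θ(c) = 0`. For a central
`c` orthogonal to `[g, g]` the Koszul formula gives `∇_c c = 0` and `∇_c (T c) = 0`, so the CKY
equation at `(c, c)` reads `⟨c, c⟩ θ = θ(c) ⟨c, ·⟩`, which forces `θ = 0`. -/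

open Module

theorem Submodule.exists_ne_zero_forall_eq_zero_of_lt_finrank {K V : Type*} [Field K]
    [AddCommGroup V] [Module K V] {n : ℕ} (Z : Submodule K V) (f : Fin n → Dual K V)
    (hZ : n < finrank K Z) : ∃ c ∈ Z, c ≠ 0 ∧ ∀ i, f i c = 0 := by
  have : FiniteDimensional K Z := Module.finite_of_finrank_pos (by omega)
  have hker : LinearMap.ker ((LinearMap.pi f).domRestrict Z) ≠ ⊥ :=
    LinearMap.ker_ne_bot_of_finrank_lt (by simpa using hZ)
  obtain ⟨⟨c, hcZ⟩, hc, hc0⟩ := Submodule.exists_mem_ne_zero_of_ne_bot hker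
  refine ⟨c, hcZ, fun h => hc0 (by simp [h]), fun i => ?_⟩
  simpa using congr_fun (LinearMap.mem_ker.mp hc) i

theorem LieAlgebra.exists_span_pair_sup_center_eq_top {K L : Type*} [Field K] [LieRing L]
    [LieAlgebra K L] (h : finrank K (center K L) + 2 = finrank K L) :
    ∃ u v : L, (center K L).toSubmodule ⊔ Submodule.span K {u, v} = ⊤ := by
  have : FiniteDimensional K L := Module.finite_of_finrank_pos (by omega)
  obtain ⟨V, hV⟩ := Submodule.exists_isCompl (center K L).toSubmodule
  have hV2 : finrank K V = 2 := by
    have := Submodule.finrank_add_eq_of_isCompl hV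
    change finrank K (center K L) + _ = _ at this
    omega
  let b := Module.finBasisOfFinrankEq K V hV2
  refine ⟨b 0, b 1, eq_top_iff.mpr ?_⟩
  rw [← hV.sup_eq_top]
  refine sup_le_sup_left (fun q hq => Submodule.mem_span_pair.mpr ?_) _
  refine ⟨b.repr ⟨q, hq⟩ 0, b.repr ⟨q, hq⟩ 1, ?_⟩
  simpa only [Fin.sum_univ_two, Submodule.coe_add, Submodule.coe_smul] using
    congrArg Subtype.val (b.sum_repr ⟨q, hq⟩)

theorem LieAlgebra.exists_lie_mem_span_singleton {K L : Type*} [Field K] [LieRing L]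
    [LieAlgebra K L] (h : finrank K (center K L) + 2 = finrank K L) :
    ∃ w : L, ∀ x y : L, ⁅x, y⁆ ∈ K ∙ w := by
  obtain ⟨u, v, huv⟩ := exists_span_pair_sup_center_eq_top h
  have hdecomp : ∀ x : L, ∃ z ∈ center K L, ∃ a b : K, z + (a • u + b • v) = x := by
    intro x
    obtain ⟨z, hz, p, hp, rfl⟩ := Submodule.mem_sup.mp (huv ▸ Submodule.mem_top (x := x))
    obtain ⟨a, b, rfl⟩ := Submodule.mem_span_pair.mp hp
    exact ⟨z, hz, a, b, rfl⟩
  refine ⟨⁅u, v⁆, fun x y => Submodule.mem_span_singleton.mpr ?_⟩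
  obtain ⟨z, hz, a, b, rfl⟩ := hdecomp x
  obtain ⟨z', hz', a', b', rfl⟩ := hdecomp y
  have hzr : ∀ t : L, ⁅t, z'⁆ = 0 := (LieModule.mem_maxTrivSubmodule K L L z').mp hz'
  have hzl : ∀ t : L, ⁅z, t⁆ = 0 := fun t => by
    rw [← lie_skew, (LieModule.mem_maxTrivSubmodule K L L z).mp hz t, neg_zero]
  refine ⟨a * b' - b * a', ?_⟩
  simp only [add_lie, lie_add, smul_lie, lie_smul, lie_self, hzl, hzr,
    ← lie_skew u v]
  module

theorem IsCKYWith.smul_eq_of_mem_center {g : Type*} [LieRing g] [LieAlgebra ℝ g]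
    {B : g →ₗ[ℝ] g →ₗ[ℝ] ℝ} {D : g → g → g} {T : g →ₗ[ℝ] g} {θ : g →ₗ[ℝ] ℝ}
    (hCKY : IsCKYWith B D T θ) (hD : IsLeviCivita B D) (hT : IsSkewSymmetric B T)
    {c : g} (hc : c ∈ LieAlgebra.center ℝ g) (hperp : ∀ x y : g, B ⁅x, y⁆ c = 0) :
    B c c • θ = θ c • B c := by
  have hcr : ∀ x : g, ⁅x, c⁆ = 0 := (LieModule.mem_maxTrivSubmodule ℝ g g c).mp hc
  have hcl : ∀ x : g, ⁅c, x⁆ = 0 := fun x => by rw [← lie_skew, hcr x, neg_zero]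
  have hDcc : ∀ w : g, B (D c c) w = 0 := fun w => by
    have := hD c c w
    rw [lie_self, hcl, hcr] at this
    simpa using this
  have hDcTc : ∀ w : g, B (D c (T c)) w = 0 := fun w => by
    have := hD c (T c) w
    rw [hcl, hcr, hperp] at this
    simpa using this
  ext w
  have := hCKY c c w
  rw [map_sub, LinearMap.sub_apply, hDcTc, hT, hDcc] at this
  simp only [LinearMap.smul_apply, smul_eq_mul]
  linarith

theorem dim5_center3_no_strict_cky_general {g : Type*} [LieRing g] [LieAlgebra ℝ g]
    (B : g →ₗ[ℝ] g →ₗ[ℝ] ℝ) (hB : IsInnerProduct B)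
    (hdim : Module.finrank ℝ g = 5)
    (hcenter : Module.finrank ℝ (LieAlgebra.center ℝ g) = 3)
    (D : g → g → g) (hD : IsLeviCivita B D)
    (T : g →ₗ[ℝ] g) (hT : IsSkewSymmetric B T)
    (θ : g →ₗ[ℝ] ℝ) (hCKY : IsCKYWith B D T θ) :
    θ = 0 := by
  obtain ⟨w₀, hw₀⟩ := LieAlgebra.exists_lie_mem_span_singleton (K := ℝ) (L := g) (by omega)
  obtain ⟨c, hcZ, hc0, hc⟩ :=
    (LieAlgebra.center ℝ g).toSubmodule.exists_ne_zero_forall_eq_zero_of_lt_finrank ![B w₀, θ]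
      (by change 2 < finrank ℝ (LieAlgebra.center ℝ g); omega)
  have hw₀c : B w₀ c = 0 := hc 0
  have hθc : θ c = 0 := hc 1
  have hperp : ∀ x y : g, B ⁅x, y⁆ c = 0 := fun x y => by
    obtain ⟨s, hs⟩ := Submodule.mem_span_singleton.mp (hw₀ x y)
    rw [← hs, map_smul, LinearMap.smul_apply, hw₀c, smul_zero]
  have := hCKY.smul_eq_of_mem_center hD hT hcZ hperp
  rw [hθc, zero_smul] at this
  exact (smul_eq_zero.mp this).resolve_left (hB.posdef c hc0).ne'

/-- A 5-dimensional metric Lie algebra with 3-dimensional center admits no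
strict CKY tensor. -/
theorem dim5_center3_no_strict_cky {g : Type*} [LieRing g] [LieAlgebra ℝ g]
    [FiniteDimensional ℝ g]
    (B : g →ₗ[ℝ] g →ₗ[ℝ] ℝ) (hB : IsInnerProduct B)
    (hdim : Module.finrank ℝ g = 5)
    (hcenter : Module.finrank ℝ (LieAlgebra.center ℝ g) = 3)
    (D : g → g → g) (hD : IsLeviCivita B D)
    (T : g →ₗ[ℝ] g) (hT : IsSkewSymmetric B T)
    (θ : g →ₗ[ℝ] ℝ) (hCKY : IsCKYWith B D T θ) :
    θ = 0 :=
  dim5_center3_no_strict_cky_general B hB hdim hcenter D hD T hT θ hCKY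
end

section
/- Let (𝔫, ⟨·,·⟩) be a 2-step nilpotent metric Lie algebra with center z(𝔫) and 𝔳 = z(𝔫)^⊥, and let T be a skew-symmetric endomorphism of 𝔫. Then T is a Killing-Yano tensor if and only if T maps z(𝔫) into z(𝔫) and for all x, y ∈ 𝔳 one has [Tx, y] = [x, Ty] and T[x, y] = 3[Tx, y]. -/
/-!
Via the Koszul formula, `T` is Killing-Yano iff a trilinear identity in brackets, `B` and `T`
holds. On a 2-step nilpotent algebra every bracket is central and `B` is definite on the center,
so testing the identity against central vectors yields, in turn, that `T` preserves the center,
that `⁅T x, y⁆ = ⁅x, T y⁆` and that `T ⁅x, y⁆ = 3 • ⁅T x, y⁆`, for all `x, y`. Conversely these two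
relations make the identity collapse. Since brackets only see the `𝔳`-components, the relations on
`𝔳 × 𝔳` propagate to all of `𝔫` once `T` preserves the center.
-/

section

variable {L : Type*} [LieRing L] [LieAlgebra ℝ L] {B : L →ₗ[ℝ] L →ₗ[ℝ] ℝ} {T : L →ₗ[ℝ] L}

namespace IsInnerProduct

lemma eq_of_forall_apply_eq_of_mem (hB : IsInnerProduct B) {p : Submodule ℝ L} {u v : L}
    (hu : u ∈ p) (hv : v ∈ p) (h : ∀ d ∈ p, B u d = B v d) : u = v := by
  by_contra hne
  have hpos := hB.posdef (u - v) (sub_ne_zero.mpr hne)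
  rw [LinearMap.map_sub₂, h _ (sub_mem hu hv), sub_self] at hpos
  exact lt_irrefl 0 hpos

lemma isCompl_orthComp [FiniteDimensional ℝ L] (hB : IsInnerProduct B) (p : Submodule ℝ L) :
    IsCompl p (orthComp B p) := by
  have hrefl : B.IsRefl := fun x y h => hB.symm x y ▸ h
  have horth : orthComp B p = LinearMap.BilinForm.orthogonal B p := by
    ext x
    exact forall₂_congr fun y _ => by rw [hB.symm]
  rw [horth, LinearMap.BilinForm.isCompl_orthogonal_iff_disjoint hrefl, Submodule.disjoint_def]
  intro x hx hx'
  by_contra hne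
  exact (hB.posdef x hne).ne' (hx' x hx)

lemma exists_mem_orthComp_sub_mem [FiniteDimensional ℝ L] (hB : IsInnerProduct B)
    (p : Submodule ℝ L) (x : L) : ∃ a ∈ orthComp B p, x - a ∈ p := by
  obtain ⟨c, a, hc, ha, rfl⟩ :=
    Submodule.codisjoint_iff_exists_add_eq.mp (hB.isCompl_orthComp p).codisjoint x
  exact ⟨a, ha, by rwa [add_sub_cancel_right]⟩

end IsInnerProduct

namespace LieAlgebra

lemma lie_eq_zero_of_mem_center_right {c : L} (hc : c ∈ center ℝ L) (x : L) : ⁅x, c⁆ = 0 :=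
  (LieModule.mem_maxTrivSubmodule ℝ L L c).mp hc x

lemma lie_eq_zero_of_mem_center_left {c : L} (hc : c ∈ center ℝ L) (x : L) : ⁅c, x⁆ = 0 := by
  rw [← lie_skew, lie_eq_zero_of_mem_center_right hc, neg_zero]

lemma lie_mem_center_of_lie_lie_eq_zero (h2step : ∀ x y z : L, ⁅x, ⁅y, z⁆⁆ = 0) (x y : L) :
    ⁅x, y⁆ ∈ center ℝ L :=
  (LieModule.mem_maxTrivSubmodule ℝ L L _).mpr fun w => h2step w x y

lemma lie_eq_lie_of_sub_mem_center {x a y b : L} (hx : x - a ∈ center ℝ L)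
    (hy : y - b ∈ center ℝ L) : ⁅x, y⁆ = ⁅a, b⁆ := by
  have h : ⁅x, y⁆ - ⁅a, b⁆ = ⁅x - a, y⁆ + ⁅a, y - b⁆ := by
    rw [sub_lie, lie_sub]
    abel
  rw [← sub_eq_zero, h, lie_eq_zero_of_mem_center_left hx, lie_eq_zero_of_mem_center_right hy,
    add_zero]

end LieAlgebra

open LieAlgebra

/-- `2 ⟨(∇ₓT)y + (∇_yT)x, z⟩` written out with the Koszul formula and simplified by the
skew-symmetry of `T` and of the bracket. -/
def KillingYanoIdentity (B : L →ₗ[ℝ] L →ₗ[ℝ] ℝ) (T : L →ₗ[ℝ] L) : Prop :=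
  ∀ x y z : L, B (⁅x, T y⁆ + ⁅y, T x⁆) z =
    B ⁅T y, z⁆ x + 2 * B ⁅y, T z⁆ x + B ⁅x, z⁆ (T y) +
      (B ⁅T x, z⁆ y + 2 * B ⁅x, T z⁆ y + B ⁅y, z⁆ (T x))

lemma isKY_iff_killingYanoIdentity {D : L → L → L} (hD : IsLeviCivita B D)
    (hT : IsSkewSymmetric B T) : IsKY B D T ↔ KillingYanoIdentity B T := by
  have skew : ∀ a b c : L, B ⁅a, b⁆ c = -B ⁅b, a⁆ c := fun a b c => by
    rw [← lie_skew, map_neg, LinearMap.neg_apply]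
  have koszul : ∀ x y z : L,
      2 * (B (D x (T y) - T (D x y)) z + B (D y (T x) - T (D y x)) z) =
        B (⁅x, T y⁆ + ⁅y, T x⁆) z -
          (B ⁅T y, z⁆ x + 2 * B ⁅y, T z⁆ x + B ⁅x, z⁆ (T y) +
            (B ⁅T x, z⁆ y + 2 * B ⁅x, T z⁆ y + B ⁅y, z⁆ (T x))) := by
    intro x y z
    have h₁ := hD x (T y) z
    have h₂ := hD x y (T z)
    have h₃ := hD y (T x) z
    have h₄ := hD y x (T z)
    have s₁ := hT (D x y) z
    have s₂ := hT (D y x) z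
    simp only [map_sub, map_add, LinearMap.sub_apply, LinearMap.add_apply] at h₁ h₂ h₃ h₄ s₁ s₂ ⊢
    linarith [skew (T z) x y, skew (T z) y x, skew y x (T z), skew z x (T y), skew z y (T x)]
  simp only [IsKY, IsCKYWith, KillingYanoIdentity, LinearMap.zero_apply, mul_zero, sub_zero]
  refine forall₃_congr fun x y z => ⟨fun h => ?_, fun h => ?_⟩ <;>
    linarith [koszul x y z]

lemma killingYanoIdentity_of_lie_apply_left (hT : IsSkewSymmetric B T)
    (hleft : ∀ x y : L, ⁅T x, y⁆ = ⁅x, T y⁆) (happly : ∀ x y : L, T ⁅x, y⁆ = (3 : ℝ) • ⁅T x, y⁆) :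
    KillingYanoIdentity B T := by
  have bracket_sym : ∀ x y : L, ⁅x, T y⁆ + ⁅y, T x⁆ = 0 := fun x y => by
    rw [← hleft x y, ← lie_skew (T x) y, neg_add_cancel]
  have lie_apply : ∀ a b c : L, B ⁅a, b⁆ (T c) = -(3 * B ⁅T a, b⁆ c) := fun a b c => by
    have := hT ⁅a, b⁆ c
    rw [happly, map_smul, LinearMap.smul_apply, smul_eq_mul] at this
    linarith
  intro x y z
  rw [bracket_sym, map_zero, LinearMap.zero_apply, lie_apply x z y, lie_apply y z x, ← hleft y z,
    ← hleft x z]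
  ring

namespace KillingYanoIdentity

lemma apply_mem_center (hK : KillingYanoIdentity B T) (hB : IsInnerProduct B)
    (h2step : ∀ x y z : L, ⁅x, ⁅y, z⁆⁆ = 0) {c : L} (hc : c ∈ center ℝ L) : T c ∈ center ℝ L := by
  have swap : ∀ x : L, ∀ a ∈ center ℝ L, ∀ b ∈ center ℝ L,
      B ⁅x, T b⁆ a = 2 * B ⁅x, T a⁆ b := by
    intro x a ha b hb
    have h := hK x b a
    simp only [lie_eq_zero_of_mem_center_left hb, lie_eq_zero_of_mem_center_right ha, add_zero,
      map_zero, LinearMap.zero_apply, mul_zero, zero_add] at h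
    linarith
  refine (LieModule.mem_maxTrivSubmodule ℝ L L _).mpr fun x => ?_
  refine hB.eq_of_forall_apply_eq_of_mem (p := (center ℝ L).toSubmodule)
    (lie_mem_center_of_lie_lie_eq_zero h2step x (T c)) (zero_mem _) fun d hd => ?_
  rw [map_zero, LinearMap.zero_apply]
  linarith [swap x c hc d hd, swap x d hd c hc]

lemma lie_apply_left (hK : KillingYanoIdentity B T) (hB : IsInnerProduct B)
    (h2step : ∀ x y z : L, ⁅x, ⁅y, z⁆⁆ = 0) (x y : L) : ⁅T x, y⁆ = ⁅x, T y⁆ := by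
  refine hB.eq_of_forall_apply_eq_of_mem (p := (center ℝ L).toSubmodule)
    (lie_mem_center_of_lie_lie_eq_zero h2step _ _)
    (lie_mem_center_of_lie_lie_eq_zero h2step _ _) fun d hd => ?_
  have hTd := hK.apply_mem_center hB h2step hd
  have h := hK x y d
  simp only [lie_eq_zero_of_mem_center_right hd, lie_eq_zero_of_mem_center_right hTd, map_zero,
    LinearMap.zero_apply, mul_zero, add_zero, map_add, LinearMap.add_apply] at h
  rw [← lie_skew, map_neg, LinearMap.neg_apply]
  linarith

lemma apply_lie (hK : KillingYanoIdentity B T) (hB : IsInnerProduct B)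
    (h2step : ∀ x y z : L, ⁅x, ⁅y, z⁆⁆ = 0) (hT : IsSkewSymmetric B T) (x y : L) :
    T ⁅x, y⁆ = (3 : ℝ) • ⁅T x, y⁆ := by
  refine hB.eq_of_forall_apply_eq_of_mem (p := (center ℝ L).toSubmodule)
    (hK.apply_mem_center hB h2step (lie_mem_center_of_lie_lie_eq_zero h2step x y))
    (Submodule.smul_mem _ _ (lie_mem_center_of_lie_lie_eq_zero h2step _ _)) fun d hd => ?_
  have hTd := hK.apply_mem_center hB h2step hd
  have h := hK x d y
  simp only [lie_eq_zero_of_mem_center_left hd, lie_eq_zero_of_mem_center_right hTd,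
    lie_eq_zero_of_mem_center_left hTd, map_zero, LinearMap.zero_apply, mul_zero, add_zero,
    zero_add, ← hK.lie_apply_left hB h2step x y] at h
  rw [hT ⁅x, y⁆ d, map_smul, LinearMap.smul_apply, smul_eq_mul]
  linarith

end KillingYanoIdentity

lemma lie_relations_of_mem_orthComp_center [FiniteDimensional ℝ L] (hB : IsInnerProduct B)
    (hTZ : ∀ z ∈ center ℝ L, T z ∈ center ℝ L)
    (hrel : ∀ x ∈ orthComp B (center ℝ L).toSubmodule, ∀ y ∈ orthComp B (center ℝ L).toSubmodule,
      ⁅T x, y⁆ = ⁅x, T y⁆ ∧ T ⁅x, y⁆ = (3 : ℝ) • ⁅T x, y⁆) (x y : L) :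
    ⁅T x, y⁆ = ⁅x, T y⁆ ∧ T ⁅x, y⁆ = (3 : ℝ) • ⁅T x, y⁆ := by
  obtain ⟨a, ha, hxa⟩ := hB.exists_mem_orthComp_sub_mem (center ℝ L).toSubmodule x
  obtain ⟨b, hb, hyb⟩ := hB.exists_mem_orthComp_sub_mem (center ℝ L).toSubmodule y
  have hTxa : T x - T a ∈ center ℝ L := map_sub T x a ▸ hTZ _ hxa
  have hTyb : T y - T b ∈ center ℝ L := map_sub T y b ▸ hTZ _ hyb
  rw [lie_eq_lie_of_sub_mem_center hTxa hyb, lie_eq_lie_of_sub_mem_center hxa hTyb,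
    lie_eq_lie_of_sub_mem_center hxa hyb]
  exact hrel a ha b hb

end

theorem two_step_ky_characterization_general {n : Type*} [LieRing n] [LieAlgebra ℝ n]
    [FiniteDimensional ℝ n]
    (B : n →ₗ[ℝ] n →ₗ[ℝ] ℝ) (hB : IsInnerProduct B)
    (h2step : ∀ x y z : n, ⁅x, ⁅y, z⁆⁆ = 0)
    (D : n → n → n) (hD : IsLeviCivita B D)
    (T : n →ₗ[ℝ] n) (hT : IsSkewSymmetric B T) :
    IsKY B D T ↔
      ((∀ z ∈ LieAlgebra.center ℝ n, T z ∈ LieAlgebra.center ℝ n) ∧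
       (∀ x ∈ orthComp B (LieAlgebra.center ℝ n).toSubmodule,
        ∀ y ∈ orthComp B (LieAlgebra.center ℝ n).toSubmodule,
          ⁅T x, y⁆ = ⁅x, T y⁆ ∧ T ⁅x, y⁆ = (3 : ℝ) • ⁅T x, y⁆)) := by
  rw [isKY_iff_killingYanoIdentity hD hT]
  constructor
  · intro hK
    exact ⟨fun z hz => hK.apply_mem_center hB h2step hz, fun x _ y _ =>
      ⟨hK.lie_apply_left hB h2step x y, hK.apply_lie hB h2step hT x y⟩⟩
  · rintro ⟨hTZ, hrel⟩
    have hglobal := lie_relations_of_mem_orthComp_center hB hTZ hrel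
    exact killingYanoIdentity_of_lie_apply_left hT (fun x y => (hglobal x y).1)
      (fun x y => (hglobal x y).2)

/-- On a 2-step nilpotent metric Lie algebra `(𝔫, B)` with `𝔳 = z(𝔫)^⊥`, a
skew-symmetric endomorphism `T` is Killing-Yano iff `T` preserves the center and
`[Tx, y] = [x, Ty]` and `T[x, y] = 3[Tx, y]` for all `x, y ∈ 𝔳`. -/
theorem two_step_ky_characterization {n : Type*} [LieRing n] [LieAlgebra ℝ n]
    [FiniteDimensional ℝ n]
    (B : n →ₗ[ℝ] n →ₗ[ℝ] ℝ) (hB : IsInnerProduct B)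
    (hnonab : ∃ x y : n, ⁅x, y⁆ ≠ 0)
    (h2step : ∀ x y z : n, ⁅x, ⁅y, z⁆⁆ = 0)
    (D : n → n → n) (hD : IsLeviCivita B D)
    (T : n →ₗ[ℝ] n) (hT : IsSkewSymmetric B T) :
    IsKY B D T ↔
      ((∀ z ∈ LieAlgebra.center ℝ n, T z ∈ LieAlgebra.center ℝ n) ∧
       (∀ x ∈ orthComp B (LieAlgebra.center ℝ n).toSubmodule,
        ∀ y ∈ orthComp B (LieAlgebra.center ℝ n).toSubmodule,
          ⁅T x, y⁆ = ⁅x, T y⁆ ∧ T ⁅x, y⁆ = (3 : ℝ) • ⁅T x, y⁆)) :=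
  two_step_ky_characterization_general B hB h2step D hD T hT
end

section
/- Let (𝔫, ⟨·,·⟩) be a 2-step nilpotent metric Lie algebra whose center z(𝔫) is 1-dimensional (equivalently, 𝔫 is isomorphic to the (2n+1)-dimensional Heisenberg Lie algebra, with an arbitrary inner product). Then every Killing-Yano tensor on (𝔫, ⟨·,·⟩) is zero. -/
/-!
Fix a nonzero central `ξ`. Expanding the Killing-Yano equation with the Koszul formula and
specialising to `x = y = ξ` shows that `[Tξ, ·]` has no `ξ`-component; specialising to `y = ξ`
then gives `2 ω(Tz, x) = ω(Tx, z)` for `ω(u, v) = ⟨[u, v], ξ⟩`, which together with the same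
identity for `x, z` swapped forces `ω(Tx, ·) = 0`. When the center is the line `ℝ ξ` and all
brackets are central, this means that `Tx` is central, hence a multiple of `ξ`, and
`⟨Tx, ξ⟩ = -⟨x, Tξ⟩` makes the multiple vanish.
-/

section KillingYano

variable {L : Type*} [LieRing L] [LieAlgebra ℝ L] {B : L →ₗ[ℝ] L →ₗ[ℝ] ℝ}
  {D : L → L → L} {T : L →ₗ[ℝ] L}

theorem IsLeviCivita.two_mul_covariantDerivative (hD : IsLeviCivita B D)
    (hT : IsSkewSymmetric B T) (x y z : L) :
    2 * B (D x (T y) - T (D x y)) z =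
      B ⁅x, T y⁆ z - B ⁅T y, z⁆ x + B ⁅z, x⁆ (T y) +
        (B ⁅x, y⁆ (T z) - B ⁅y, T z⁆ x + B ⁅T z, x⁆ y) := by
  rw [map_sub, LinearMap.sub_apply, hT]
  linear_combination hD x (T y) z + hD x y (T z)

theorem IsKY.koszul_expansion (hKY : IsKY B D T) (hD : IsLeviCivita B D)
    (hT : IsSkewSymmetric B T) (x y z : L) :
    B ⁅x, T y⁆ z - B ⁅T y, z⁆ x + B ⁅z, x⁆ (T y) - B ⁅y, T z⁆ x + B ⁅T z, x⁆ y +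
      (B ⁅y, T x⁆ z - B ⁅T x, z⁆ y + B ⁅z, y⁆ (T x) - B ⁅x, T z⁆ y + B ⁅T z, y⁆ x) = 0 := by
  have hky := hKY x y z
  simp only [LinearMap.zero_apply, mul_zero, sub_zero] at hky
  have hyx : B ⁅y, x⁆ (T z) = -B ⁅x, y⁆ (T z) := by
    rw [← lie_skew, map_neg, LinearMap.neg_apply]
  linear_combination 2 * hky - hD.two_mul_covariantDerivative hT x y z -
    hD.two_mul_covariantDerivative hT y x z - hyx

variable {ξ : L} (hξ : ξ ∈ LieAlgebra.center ℝ L)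
include hξ

theorem IsKY.inner_lie_apply_central_eq_zero (hKY : IsKY B D T) (hD : IsLeviCivita B D)
    (hT : IsSkewSymmetric B T) (z : L) : B ⁅T ξ, z⁆ ξ = 0 := by
  have hcentral : ∀ u, ⁅u, ξ⁆ = 0 := (LieModule.mem_maxTrivSubmodule ℝ L L ξ).mp hξ
  have h := hKY.koszul_expansion hD hT ξ ξ z
  simp only [hcentral, ← lie_skew ξ, neg_zero, map_zero, LinearMap.zero_apply] at h
  linarith

theorem IsKY.inner_lie_apply_eq_zero (hKY : IsKY B D T) (hD : IsLeviCivita B D)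
    (hT : IsSkewSymmetric B T) (hTξ : T ξ = 0) (x z : L) : B ⁅T x, z⁆ ξ = 0 := by
  have hcentral : ∀ u, ⁅u, ξ⁆ = 0 := (LieModule.mem_maxTrivSubmodule ℝ L L ξ).mp hξ
  have hskew : ∀ u v : L, B ⁅u, v⁆ ξ = -B ⁅v, u⁆ ξ := fun u v => by
    rw [← lie_skew u v, map_neg, LinearMap.neg_apply]
  -- `2 ω(Tz, x) = ω(Tx, z)` and its mirror image give `4 ω(Tx, z) = ω(Tx, z)`
  have hxz := hKY.koszul_expansion hD hT x ξ z
  have hzx := hKY.koszul_expansion hD hT z ξ x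
  simp only [hTξ, hcentral, ← lie_skew ξ, neg_zero, lie_zero, zero_lie, map_zero,
    LinearMap.zero_apply] at hxz hzx
  linarith [hskew x (T z), hskew z (T x)]

end KillingYano

section LineCenter

variable {L : Type*} [LieRing L] [LieAlgebra ℝ L] {B : L →ₗ[ℝ] L →ₗ[ℝ] ℝ} {ξ : L}
  (hspan : ∀ w ∈ LieAlgebra.center ℝ L, ∃ c : ℝ, c • ξ = w) (hξξ : B ξ ξ ≠ 0)
include hspan hξξ

theorem eq_zero_of_mem_center_of_inner_eq_zero {w : L} (hw : w ∈ LieAlgebra.center ℝ L)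
    (hwξ : B w ξ = 0) : w = 0 := by
  obtain ⟨c, rfl⟩ := hspan w hw
  simp only [map_smul, LinearMap.smul_apply, smul_eq_mul, mul_eq_zero, hξξ, or_false] at hwξ
  rw [hwξ, zero_smul]

theorem mem_center_of_inner_lie_eq_zero (h2step : ∀ x y z : L, ⁅x, ⁅y, z⁆⁆ = 0) {w : L}
    (hw : ∀ z, B ⁅w, z⁆ ξ = 0) : w ∈ LieAlgebra.center ℝ L := by
  refine (LieModule.mem_maxTrivSubmodule ℝ L L w).mpr fun u => ?_
  have hcentral : ⁅w, u⁆ ∈ LieAlgebra.center ℝ L :=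
    (LieModule.mem_maxTrivSubmodule ℝ L L _).mpr fun v => h2step v w u
  rw [← lie_skew, eq_zero_of_mem_center_of_inner_eq_zero hspan hξξ hcentral (hw u), neg_zero]

theorem eq_zero_of_inner_lie_eq_zero (h2step : ∀ x y z : L, ⁅x, ⁅y, z⁆⁆ = 0) {w : L}
    (hw : ∀ z, B ⁅w, z⁆ ξ = 0) (hwξ : B w ξ = 0) : w = 0 :=
  eq_zero_of_mem_center_of_inner_eq_zero hspan hξξ
    (mem_center_of_inner_lie_eq_zero hspan hξξ h2step hw) hwξ

end LineCenter

theorem heisenberg_ky_trivial_general {n : Type*} [LieRing n] [LieAlgebra ℝ n]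
    (B : n →ₗ[ℝ] n →ₗ[ℝ] ℝ) (hB : IsInnerProduct B)
    (h2step : ∀ x y z : n, ⁅x, ⁅y, z⁆⁆ = 0)
    (hcenter : Module.finrank ℝ (LieAlgebra.center ℝ n) = 1)
    (D : n → n → n) (hD : IsLeviCivita B D)
    (T : n →ₗ[ℝ] n) (hT : IsSkewSymmetric B T) (hKY : IsKY B D T) :
    T = 0 := by
  obtain ⟨ξ, hξ0, hspan⟩ := finrank_eq_one_iff'.mp hcenter
  have hline : ∀ w ∈ LieAlgebra.center ℝ n, ∃ c : ℝ, c • (ξ : n) = w := fun w hw =>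
    (hspan ⟨w, hw⟩).imp fun c hc => congrArg Subtype.val hc
  have hξξ : B ξ ξ ≠ 0 := (hB.posdef ξ (by simpa using hξ0)).ne'
  have hTξ : T ξ = 0 :=
    eq_zero_of_inner_lie_eq_zero hline hξξ h2step
      (hKY.inner_lie_apply_central_eq_zero ξ.2 hD hT) (by linarith [hT ξ ξ, hB.symm ξ (T ξ)])
  ext x
  exact eq_zero_of_inner_lie_eq_zero hline hξξ h2step
    (hKY.inner_lie_apply_eq_zero ξ.2 hD hT hTξ x) (by rw [hT, hTξ, map_zero, neg_zero])

/-- On a 2-step nilpotent metric Lie algebra with 1-dimensional center (a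
Heisenberg Lie algebra with arbitrary inner product), every Killing-Yano tensor is zero. -/
theorem heisenberg_ky_trivial {n : Type*} [LieRing n] [LieAlgebra ℝ n]
    [FiniteDimensional ℝ n]
    (B : n →ₗ[ℝ] n →ₗ[ℝ] ℝ) (hB : IsInnerProduct B)
    (hnonab : ∃ x y : n, ⁅x, y⁆ ≠ 0)
    (h2step : ∀ x y z : n, ⁅x, ⁅y, z⁆⁆ = 0)
    (hcenter : Module.finrank ℝ (LieAlgebra.center ℝ n) = 1)
    (D : n → n → n) (hD : IsLeviCivita B D)
    (T : n →ₗ[ℝ] n) (hT : IsSkewSymmetric B T) (hKY : IsKY B D T) :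
    T = 0 :=
  heisenberg_ky_trivial_general B hB h2step hcenter D hD T hT hKY
end

section
/- Let (𝔫, ⟨·,·⟩) be a (non-abelian) 2-step nilpotent metric Lie algebra. Then 𝔫 admits no left-invariant nearly Kähler structure: there is no skew-symmetric endomorphism J of 𝔫 with J² = −id satisfying (∇_x J)x = 0 for all x ∈ 𝔫. -/
/-- A (non-abelian) 2-step nilpotent metric Lie algebra admits no nearly
Kähler structure: no skew-symmetric `J` with `J² = −id` and `(∇ₓJ)x = 0` for all `x`. -/
theorem two_step_no_nearly_kaehler {n : Type*} [LieRing n] [LieAlgebra ℝ n]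
    [FiniteDimensional ℝ n]
    (B : n →ₗ[ℝ] n →ₗ[ℝ] ℝ) (hB : IsInnerProduct B)
    (hnonab : ∃ x y : n, ⁅x, y⁆ ≠ 0)
    (h2step : ∀ x y z : n, ⁅x, ⁅y, z⁆⁆ = 0)
    (D : n → n → n) (hD : IsLeviCivita B D) :
    ¬ ∃ J : n →ₗ[ℝ] n, IsSkewSymmetric B J ∧ (∀ x : n, J (J x) = -x) ∧
        (∀ x : n, D x (J x) - J (D x x) = 0) := by
  rintro ⟨J, hskew, hJ2, hNK⟩
  obtain ⟨u0, w0, hbr⟩ := hnonab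
  -- positive definiteness gives: B w w = 0 → w = 0
  have hB0 : ∀ w : n, B w w = 0 → w = 0 := by
    intro w hw
    by_contra h
    exact (hB.posdef w h).ne' hw
  -- all brackets are central
  have hcent' : ∀ u v a : n, ⁅a, (⁅u, v⁆ : n)⁆ = 0 := fun u v a => h2step a u v
  have hcent : ∀ u v a : n, ⁅(⁅u, v⁆ : n), a⁆ = 0 := by
    intro u v a
    rw [← lie_skew, h2step a u v, neg_zero]
  -- the fundamental scalar identity Φ(x,z) = 0 from nearly Kähler + Koszul
  have hPhi : ∀ x z : n, B ⁅x, J x⁆ z - B ⁅J x, z⁆ x + B ⁅z, x⁆ (J x)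
      - B ⁅x, J z⁆ x + B ⁅J z, x⁆ x = 0 := by
    intro x z
    have h1 := hD x (J x) z
    have h2 := hD x x (J z)
    have h3 : B (D x (J x)) z = B (J (D x x)) z := by
      have h5 : D x (J x) = J (D x x) := by
        have := hNK x; rwa [sub_eq_zero] at this
      rw [h5]
    have h4 : B (J (D x x)) z = - B (D x x) (J z) := hskew (D x x) z
    rw [lie_self] at h2
    simp only [map_zero, LinearMap.zero_apply] at h2
    linarith
  -- polarized version G(x,y,z) = 0
  have hG : ∀ x y z : n, B ⁅x, J y⁆ z + B ⁅y, J x⁆ z - B ⁅J x, z⁆ y - B ⁅J y, z⁆ x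
      + B ⁅z, x⁆ (J y) + B ⁅z, y⁆ (J x) - B ⁅x, J z⁆ y - B ⁅y, J z⁆ x
      + B ⁅J z, x⁆ y + B ⁅J z, y⁆ x = 0 := by
    intro x y z
    have h1 := hPhi (x + y) z
    have h2 := hPhi x z
    have h3 := hPhi y z
    simp only [map_add, lie_add, add_lie, LinearMap.add_apply] at h1
    linarith
  -- Lemma 1: if ζ is central then ⁅v, Jζ⁆ = 0
  have hL1 : ∀ v ζ : n, (∀ a : n, ⁅ζ, a⁆ = 0) → ⁅v, J ζ⁆ = 0 := by
    intro v ζ hc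
    have hc' : ∀ a : n, ⁅a, ζ⁆ = 0 := by
      intro a; rw [← lie_skew, hc a, neg_zero]
    set η := ⁅v, J ζ⁆ with hη
    have hηc : ∀ a : n, ⁅η, a⁆ = 0 := fun a => hcent v (J ζ) a
    have hηc' : ∀ a : n, ⁅a, η⁆ = 0 := fun a => hcent' v (J ζ) a
    have g1 := hG v ζ η
    have g2 := hG v η ζ
    simp only [hc, hc', hηc, hηc', map_zero, LinearMap.zero_apply, add_zero, zero_add,
      sub_zero, zero_sub, neg_zero] at g1 g2
    -- rewrite ⁅J η, v⁆ = -⁅v, J η⁆ and ⁅J ζ, v⁆ = -⁅v, J ζ⁆ style terms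
    have e1 : (⁅J η, v⁆ : n) = -⁅v, J η⁆ := by rw [← lie_skew]
    have e2 : (⁅J ζ, v⁆ : n) = -⁅v, J ζ⁆ := by rw [← lie_skew]
    rw [e1] at g1
    rw [e2] at g2
    simp only [map_neg, LinearMap.neg_apply] at g1 g2
    have hzero : B η η = 0 := by
      -- careful: need exact algebraic combination
      linarith
    exact hB0 η hzero
  -- F : ⁅x, J x⁆ = 0
  have hF : ∀ x : n, ⁅x, J x⁆ = 0 := by
    intro x
    set ζ := ⁅x, J x⁆ with hζ
    have hcζ : ∀ a : n, ⁅ζ, a⁆ = 0 := fun a => hcent x (J x) a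
    have hcζ' : ∀ a : n, ⁅a, ζ⁆ = 0 := fun a => hcent' x (J x) a
    have hL := hL1 x ζ hcζ
    have hL' : (⁅J ζ, x⁆ : n) = 0 := by rw [← lie_skew, hL, neg_zero]
    have hp := hPhi x ζ
    rw [hL, hL', hcζ' (J x), hcζ x] at hp
    simp only [map_zero, LinearMap.zero_apply, sub_zero, add_zero] at hp
    exact hB0 ζ hp
  -- polarized F : ⁅x, J z⁆ = ⁅J x, z⁆
  have hF2 : ∀ x z : n, (⁅x, J z⁆ : n) = ⁅J x, z⁆ := by
    intro x z
    have h1 := hF (x + z)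
    simp only [map_add, lie_add, add_lie, hF x, hF z, add_zero, zero_add] at h1
    have : (⁅x, J z⁆ : n) = -⁅z, J x⁆ := by
      have h2 : (⁅z, J x⁆ : n) + ⁅x, J z⁆ = 0 ∨ (⁅x, J z⁆ : n) + ⁅z, J x⁆ = 0 := by
        first
          | exact Or.inl h1
          | exact Or.inr h1
      rcases h2 with h2 | h2
      · exact eq_neg_of_add_eq_zero_right h2
      · exact eq_neg_of_add_eq_zero_left h2
    rw [this, lie_skew]
  -- Φ'' : -3 B ⁅Jx,z⁆ x + B ⁅z,x⁆ (Jx) = 0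
  have hPhi2 : ∀ x z : n, -3 * B ⁅J x, z⁆ x + B ⁅z, x⁆ (J x) = 0 := by
    intro x z
    have hp := hPhi x z
    have e1 : (⁅J z, x⁆ : n) = -⁅J x, z⁆ := by rw [← lie_skew, hF2 x z]
    rw [hF x, hF2 x z, e1] at hp
    simp only [map_zero, LinearMap.zero_apply, map_neg, LinearMap.neg_apply] at hp
    linarith
  -- M : B ⁅Jx,z⁆ x = 0
  have hM : ∀ x z : n, B ⁅J x, z⁆ x = 0 := by
    intro x z
    have h1 := hPhi2 x z
    have h2 := hPhi2 (J x) z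
    rw [hJ2 x] at h2
    simp only [neg_lie, lie_neg, map_neg, LinearMap.neg_apply] at h2
    -- relate B ⁅z,x⁆ (J x) and B ⁅x,z⁆ (J x), B ⁅z,Jx⁆ x and B ⁅Jx,z⁆ x
    have e1 : (⁅z, x⁆ : n) = -⁅x, z⁆ := by rw [← lie_skew]
    have e2 : (⁅z, J x⁆ : n) = -⁅J x, z⁆ := by rw [← lie_skew]
    rw [e1] at h1
    rw [e2] at h2
    simp only [map_neg, LinearMap.neg_apply] at h1 h2
    linarith
  -- polarized M
  have hM' : ∀ x y z : n, B ⁅J x, z⁆ y + B ⁅J y, z⁆ x = 0 := by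
    intro x y z
    have h1 := hM (x + y) z
    simp only [map_add, add_lie, LinearMap.add_apply, hM x z, hM y z] at h1
    linarith
  -- N : B ⁅z,x⁆ (Jy) + B ⁅z,y⁆ (Jx) = 0
  have hN : ∀ x y z : n, B ⁅z, x⁆ (J y) + B ⁅z, y⁆ (J x) = 0 := by
    intro x y z
    have h1 := hPhi2 (x + y) z
    have h2 := hPhi2 x z
    have h3 := hPhi2 y z
    have h4 := hM' x y z
    simp only [map_add, lie_add, add_lie, LinearMap.add_apply] at h1
    linarith
  -- key : B ⁅z,x⁆ ⁅u,w⁆ = 0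
  have key : ∀ z x u w : n, B ⁅z, x⁆ ⁅u, w⁆ = 0 := by
    intro z x u w
    have h1 := hN x (J ⁅u, w⁆) z
    rw [hJ2 ⁅u, w⁆, hL1 z ⁅u, w⁆ (hcent u w)] at h1
    simp only [map_zero, LinearMap.zero_apply, map_neg, LinearMap.neg_apply, add_zero] at h1
    linarith
  have : (⁅u0, w0⁆ : n) = 0 := hB0 _ (key u0 w0 u0 w0)
  exact hbr this
end

section
/- Let (𝔫, ⟨·,·⟩) be a 2-step nilpotent metric Lie algebra admitting an invertible Killing-Yano tensor. Then 𝔫 admits a bi-invariant orthogonal complex structure: there exists an endomorphism J of 𝔫 with J² = −id, J[x, y] = [Jx, y] = [x, Jy] for all x, y ∈ 𝔫, and ⟨Jx, Jy⟩ = ⟨x, y⟩ for all x, y ∈ 𝔫. -/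
/-!
Eliminating `∇` through the Koszul formula turns the Killing-Yano equation into an identity
involving only brackets, `B` and `T`. On a 2-step nilpotent algebra most of its terms vanish when
one argument is central; the survivors, tested against central elements (every bracket is
central), show successively that `T` preserves the center, that `⁅T x, y⁆ = ⁅x, T y⁆`, and that
`T ⁅x, y⁆ = 3 • ⁅T x, y⁆`. The positive operator `P = -T²` then satisfies `⁅P x, y⁆ = ⁅x, P y⁆`
and `P ⁅x, y⁆ = 9 • ⁅P x, y⁆`, so `P^{-1/2}` commutes with `T` and with the bracket up to the
factor `1/√9 = 1/3`, and `J = T P^{-1/2}` is the required complex structure.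
-/
open LieAlgebra Module

namespace Module.Basis

variable {K E M ι : Type*} [Field K] [AddCommGroup E] [Module K E] [AddCommGroup M] [Module K M]
  {b : Basis ι K E} {μ : ι → K} {P F : E →ₗ[K] E} {f : K → K}

theorem repr_apply_of_diagonal {d : ι → K} (hF : ∀ i, F (b i) = d i • b i) (v : E) (i : ι) :
    b.repr (F v) i = d i * b.repr v i := by
  have hcoord : b.coord i ∘ₗ F = d i • b.coord i := b.ext fun j => by
    rcases eq_or_ne i j with rfl | hij
    · simp [hF]
    · simp [hF, hij]
  simpa using LinearMap.congr_fun hcoord v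

theorem apply_eq_smul_of_diagonal (hP : ∀ i, P (b i) = μ i • b i)
    (hF : ∀ i, F (b i) = f (μ i) • b i) {v : E} {l : K} (hv : P v = l • v) : F v = f l • v := by
  refine b.ext_elem fun i => ?_
  have hPi := repr_apply_of_diagonal hP v i
  rw [hv, map_smul, Finsupp.smul_apply, smul_eq_mul] at hPi
  rw [repr_apply_of_diagonal hF, map_smul, Finsupp.smul_apply, smul_eq_mul]
  rcases eq_or_ne (b.repr v i) 0 with h | h
  · simp [h]
  · rw [mul_right_cancel₀ h hPi]

theorem commute_of_diagonal (hP : ∀ i, P (b i) = μ i • b i)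
    (hF : ∀ i, F (b i) = f (μ i) • b i) {A : E →ₗ[K] E} (hA : ∀ x, A (P x) = P (A x)) (x : E) :
    A (F x) = F (A x) := by
  refine LinearMap.congr_fun (b.ext (f₁ := A ∘ₗ F) (f₂ := F ∘ₗ A) fun i => ?_) x
  have hAi : P (A (b i)) = μ i • A (b i) := by rw [← hA, hP, map_smul]
  simp only [LinearMap.comp_apply, hF, map_smul, apply_eq_smul_of_diagonal hP hF hAi]

theorem bilin_comm_of_diagonal (hP : ∀ i, P (b i) = μ i • b i)
    (hF : ∀ i, F (b i) = f (μ i) • b i) {β : E →ₗ[K] E →ₗ[K] M}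
    (hβ : ∀ u w, β (P u) w = β u (P w)) (u w : E) : β (F u) w = β u (F w) := by
  refine LinearMap.congr_fun₂ (LinearMap.ext_basis b b (B := β ∘ₗ F) (B' := β.compl₂ F)
    fun i j => ?_) u w
  have hij := hβ (b i) (b j)
  simp only [hP, map_smul, LinearMap.smul_apply] at hij
  simp only [LinearMap.comp_apply, LinearMap.compl₂_apply, hF, map_smul, LinearMap.smul_apply]
  rcases eq_or_ne (μ i) (μ j) with h | h
  · rw [h]
  · have hzero : β (b i) (b j) = 0 := by
      rw [← sub_eq_zero, ← sub_smul] at hij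
      exact (smul_eq_zero.mp hij).resolve_left (sub_ne_zero.mpr h)
    simp [hzero]

theorem apply_map_eq_smul_of_diagonal (hP : ∀ i, P (b i) = μ i • b i)
    (hF : ∀ i, F (b i) = f (μ i) • b i) {L : E →ₗ[K] E} {s r : K}
    (hL : ∀ u, P (L u) = s • L (P u)) (hf : ∀ i, f (s * μ i) = r * f (μ i)) (u : E) :
    F (L u) = r • L (F u) := by
  refine LinearMap.congr_fun (b.ext (f₁ := F ∘ₗ L) (f₂ := r • (L ∘ₗ F)) fun i => ?_) u
  have hLi : P (L (b i)) = (s * μ i) • L (b i) := by rw [hL, hP, map_smul, smul_smul]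
  simp only [LinearMap.comp_apply, LinearMap.smul_apply, hF, map_smul,
    apply_eq_smul_of_diagonal hP hF hLi, hf, smul_smul]

end Module.Basis

theorem exists_eigenbasis_of_posDef {E : Type*} [AddCommGroup E] [Module ℝ E]
    [FiniteDimensional ℝ E] (B : E →ₗ[ℝ] E →ₗ[ℝ] ℝ) (hsymm : ∀ x y, B x y = B y x)
    (hpos : ∀ x, x ≠ 0 → 0 < B x x) {P : E →ₗ[ℝ] E} (hP : ∀ x y, B (P x) y = B x (P y))
    (hPpos : ∀ x, x ≠ 0 → 0 < B (P x) x) :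
    ∃ (b : Basis (Fin (finrank ℝ E)) ℝ E) (μ : Fin (finrank ℝ E) → ℝ),
      (∀ i, P (b i) = μ i • b i) ∧ ∀ i, 0 < μ i := by
  let core : InnerProductSpace.Core ℝ E :=
    { inner := fun x y => B x y
      conj_inner_symm := fun x y => by simpa using hsymm y x
      re_inner_nonneg := fun x => by
        rcases eq_or_ne x 0 with rfl | h
        · simp
        · simpa using (hpos x h).le
      definite := fun x hx => by
        by_contra h
        exact (hpos x h).ne' hx
      add_left := fun x y z => by simp
      smul_left := fun x y r => by simp }
  let _ := core.toNormedAddCommGroup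
  let _ := InnerProductSpace.ofCore core.toCore
  have hPsymm : P.IsSymmetric := hP
  refine ⟨(hPsymm.eigenvectorBasis rfl).toBasis, hPsymm.eigenvalues rfl, fun i => ?_, fun i => ?_⟩
  · simp [hPsymm.apply_eigenvectorBasis rfl i]
  · set v := hPsymm.eigenvectorBasis rfl i
    have hv : v ≠ 0 := (hPsymm.eigenvectorBasis rfl).toBasis.ne_zero i
    have hPv := hPpos v hv
    rw [hPsymm.apply_eigenvectorBasis rfl i, map_smul, LinearMap.smul_apply, smul_eq_mul] at hPv
    exact pos_of_mul_pos_left hPv (hpos v hv).le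

theorem IsInnerProduct.eq_zero_of_apply_self {E : Type*} [LieRing E] [LieAlgebra ℝ E]
    {B : E →ₗ[ℝ] E →ₗ[ℝ] ℝ} (hB : IsInnerProduct B) {v : E} (hv : B v v = 0) : v = 0 := by
  by_contra h
  exact (hB.posdef v h).ne' hv

section KillingYano

variable {n : Type*} [LieRing n] [LieAlgebra ℝ n] {B : n →ₗ[ℝ] n →ₗ[ℝ] ℝ} {D : n → n → n}
  {T : n →ₗ[ℝ] n}

/-- Twice the Killing-Yano equation at `(x, y, z)`, after `⟨T ∇ₐb, c⟩ = -⟨∇ₐb, T c⟩` and the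
Koszul formula have eliminated `∇`. -/
theorem IsKY.koszul_identity (hKY : IsKY B D T) (hD : IsLeviCivita B D)
    (hT : IsSkewSymmetric B T) (x y z : n) :
    (B ⁅x, T y⁆ z - B ⁅T y, z⁆ x + B ⁅z, x⁆ (T y))
      + (B ⁅x, y⁆ (T z) - B ⁅y, T z⁆ x + B ⁅T z, x⁆ y)
      + (B ⁅y, T x⁆ z - B ⁅T x, z⁆ y + B ⁅z, y⁆ (T x))
      + (B ⁅y, x⁆ (T z) - B ⁅x, T z⁆ y + B ⁅T z, y⁆ x) = 0 := by
  have hxy := hKY x y z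
  simp only [map_sub, LinearMap.sub_apply, LinearMap.zero_apply, mul_zero, sub_zero] at hxy
  linear_combination 2 * hxy + 2 * hT (D x y) z + 2 * hT (D y x) z
    - hD x (T y) z - hD x y (T z) - hD y (T x) z - hD y x (T z)

theorem lie_mem_center (h2step : ∀ x y z : n, ⁅x, ⁅y, z⁆⁆ = 0) (x y : n) :
    ⁅x, y⁆ ∈ center ℝ n :=
  (LieModule.mem_maxTrivSubmodule ℝ n n _).2 fun z => h2step z x y

theorem IsKY.apply_lie_center_eq_zero (hKY : IsKY B D T) (hD : IsLeviCivita B D)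
    (hT : IsSkewSymmetric B T) {c c' : n} (hc : c ∈ center ℝ n) (hc' : c' ∈ center ℝ n)
    (x : n) : B ⁅x, T c⁆ c' = 0 := by
  have htwice : ∀ {c c'}, c ∈ center ℝ n → c' ∈ center ℝ n →
      B ⁅x, T c'⁆ c = 2 * B ⁅x, T c⁆ c' := by
    intro c c' hc hc'
    have hkey := hKY.koszul_identity hD hT x c' c
    simp only [LieModule.mem_maxTrivSubmodule] at hc hc'
    simp only [hc, hc', ← lie_skew c, ← lie_skew c', ← lie_skew (T c) x, neg_zero, map_zero,
      map_neg, LinearMap.zero_apply, LinearMap.neg_apply] at hkey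
    linear_combination hkey
  linarith [htwice hc hc', htwice hc' hc]

theorem IsKY.apply_mem_center (hKY : IsKY B D T) (hD : IsLeviCivita B D)
    (hT : IsSkewSymmetric B T) (hB : IsInnerProduct B) (h2step : ∀ x y z : n, ⁅x, ⁅y, z⁆⁆ = 0)
    {c : n} (hc : c ∈ center ℝ n) : T c ∈ center ℝ n :=
  (LieModule.mem_maxTrivSubmodule ℝ n n _).2 fun u =>
    hB.eq_zero_of_apply_self <|
      hKY.apply_lie_center_eq_zero hD hT hc (lie_mem_center h2step u (T c)) u

theorem IsKY.lie_apply_comm (hKY : IsKY B D T) (hD : IsLeviCivita B D)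
    (hT : IsSkewSymmetric B T) (hB : IsInnerProduct B) (h2step : ∀ x y z : n, ⁅x, ⁅y, z⁆⁆ = 0)
    (x y : n) : ⁅T x, y⁆ = ⁅x, T y⁆ := by
  have horth : ∀ c ∈ center ℝ n, B (⁅x, T y⁆ + ⁅y, T x⁆) c = 0 := by
    intro c hc
    have hTc := hKY.apply_mem_center hD hT hB h2step hc
    have hkey := hKY.koszul_identity hD hT x y c
    simp only [LieModule.mem_maxTrivSubmodule] at hc hTc
    simp only [hc, hTc, ← lie_skew c, ← lie_skew (T c), ← lie_skew x y, neg_zero, map_zero,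
      map_neg, LinearMap.zero_apply, LinearMap.neg_apply] at hkey
    rw [map_add, LinearMap.add_apply]
    linear_combination hkey
  have hsum : ⁅x, T y⁆ + ⁅y, T x⁆ = 0 := hB.eq_zero_of_apply_self <|
    horth _ (add_mem (lie_mem_center h2step _ _) (lie_mem_center h2step _ _))
  rw [eq_neg_of_add_eq_zero_left hsum, lie_skew]

theorem IsKY.apply_lie (hKY : IsKY B D T) (hD : IsLeviCivita B D)
    (hT : IsSkewSymmetric B T) (hB : IsInnerProduct B) (h2step : ∀ x y z : n, ⁅x, ⁅y, z⁆⁆ = 0)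
    (x y : n) : T ⁅x, y⁆ = (3 : ℝ) • ⁅T x, y⁆ := by
  have horth : ∀ c ∈ center ℝ n, B ((3 : ℝ) • ⁅T x, y⁆ - T ⁅x, y⁆) c = 0 := by
    intro c hc
    have hTc := hKY.apply_mem_center hD hT hB h2step hc
    have hkey := hKY.koszul_identity hD hT y c x
    simp only [LieModule.mem_maxTrivSubmodule] at hc hTc
    simp only [hc, hTc, ← lie_skew c, ← lie_skew (T c), hKY.lie_apply_comm hD hT hB h2step y x,
      ← lie_skew y (T x), neg_zero, map_zero, map_neg, LinearMap.zero_apply,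
      LinearMap.neg_apply] at hkey
    rw [map_sub, map_smul, LinearMap.sub_apply, LinearMap.smul_apply, smul_eq_mul, hT]
    linear_combination hkey
  have hdiff : (3 : ℝ) • ⁅T x, y⁆ - T ⁅x, y⁆ = 0 := hB.eq_zero_of_apply_self <|
    horth _ (sub_mem (Submodule.smul_mem _ _ (lie_mem_center h2step _ _))
      (hKY.apply_mem_center hD hT hB h2step (lie_mem_center h2step _ _)))
  exact (sub_eq_zero.mp hdiff).symm

end KillingYano

theorem IsSkewSymmetric.apply_apply {E : Type*} [LieRing E] [LieAlgebra ℝ E]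
    {B : E →ₗ[ℝ] E →ₗ[ℝ] ℝ} {T : E →ₗ[ℝ] E} (hT : IsSkewSymmetric B T) (x y : E) :
    B (T x) (T y) = B x (-T (T y)) := by
  rw [hT, map_neg]

/-- `J` is the orthogonal factor `T (-T²)^{-1/2}` in the polar decomposition of `T`. -/
theorem exists_biinvariant_complex_of_apply_lie {n : Type*} [LieRing n] [LieAlgebra ℝ n]
    [FiniteDimensional ℝ n] {B : n →ₗ[ℝ] n →ₗ[ℝ] ℝ} (hB : IsInnerProduct B) {T : n →ₗ[ℝ] n}
    (hT : IsSkewSymmetric B T) (hTinj : Function.Injective T)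
    (hcomm : ∀ x y : n, ⁅T x, y⁆ = ⁅x, T y⁆) (hlie : ∀ x y : n, T ⁅x, y⁆ = (3 : ℝ) • ⁅T x, y⁆) :
    ∃ J : n →ₗ[ℝ] n, (∀ x : n, J (J x) = -x) ∧
      (∀ x y : n, J ⁅x, y⁆ = ⁅J x, y⁆) ∧ (∀ x y : n, ⁅J x, y⁆ = ⁅x, J y⁆) ∧
      (∀ x y : n, B (J x) (J y) = B x y) := by
  set P : n →ₗ[ℝ] n := -(T ∘ₗ T)
  have hPapply (x : n) : P x = -T (T x) := rfl
  have hPsymm (x y : n) : B (P x) y = B x (P y) := by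
    rw [hPapply, map_neg, LinearMap.neg_apply, hT, neg_neg, hT.apply_apply, hPapply]
  have hPpos (x : n) (hx : x ≠ 0) : 0 < B (P x) x := by
    rw [hPsymm, hPapply, ← hT.apply_apply]
    exact hB.posdef _ ((map_ne_zero_iff T hTinj).2 hx)
  obtain ⟨b, μ, hb, hμ⟩ := exists_eigenbasis_of_posDef B hB.symm hB.posdef hPsymm hPpos
  let g : ℝ → ℝ := fun t => (√t)⁻¹
  set F : n →ₗ[ℝ] n := b.constr ℝ fun i => g (μ i) • b i
  have hF (i) : F (b i) = g (μ i) • b i := b.constr_basis ℝ _ i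
  have hFT (x : n) : T (F x) = F (T x) :=
    b.commute_of_diagonal hb hF (fun _ => by rw [hPapply, hPapply, map_neg]) x
  have hFPF (x : n) : F (P (F x)) = x := by
    refine LinearMap.congr_fun (b.ext (f₁ := F ∘ₗ P ∘ₗ F) (f₂ := LinearMap.id) fun i => ?_) x
    have hsqrt : g (μ i) * μ i * g (μ i) = 1 := by
      rw [mul_right_comm, ← mul_inv, Real.mul_self_sqrt (hμ i).le, inv_mul_cancel₀ (hμ i).ne']
    simp only [LinearMap.comp_apply, hF, hb, map_smul, smul_smul, hsqrt, one_smul,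
      LinearMap.id_apply]
  have hFB (x y : n) : B (F x) y = B x (F y) := b.bilin_comm_of_diagonal hb hF hPsymm x y
  have hFcomm (x y : n) : ⁅F x, y⁆ = ⁅x, F y⁆ :=
    b.bilin_comm_of_diagonal (β := (ad ℝ n : n →ₗ[ℝ] Module.End ℝ n)) hb hF
      (fun u w => by simp [hPapply, hcomm]) x y
  have hFlie (x y : n) : F ⁅x, y⁆ = (3 : ℝ)⁻¹ • ⁅F x, y⁆ :=
    b.apply_map_eq_smul_of_diagonal (L := (ad ℝ n : n →ₗ[ℝ] Module.End ℝ n).flip y) (s := 9) hb hF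
      (fun u => show P ⁅u, y⁆ = (9 : ℝ) • ⁅P u, y⁆ by
        rw [hPapply, hPapply, hlie, map_smul, hlie, neg_lie, smul_smul, smul_neg]
        norm_num)
      (fun i => by
        have hsqrt9 : √9 = (3 : ℝ) := by
          rw [show (9 : ℝ) = 3 ^ 2 by norm_num, Real.sqrt_sq zero_le_three]
        simp only [g]
        rw [Real.sqrt_mul (by norm_num), hsqrt9, mul_inv]) x
  refine ⟨T ∘ₗ F, fun x => ?_, fun x y => ?_, fun x y => ?_, fun x y => ?_⟩
  · simp only [LinearMap.comp_apply]
    rw [hFT, ← neg_neg (T (T (F x))), ← hPapply, map_neg, hFPF]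
  · simp only [LinearMap.comp_apply]
    rw [hFlie, map_smul, hlie, smul_smul, inv_mul_cancel₀ three_ne_zero, one_smul]
  · simp only [LinearMap.comp_apply]
    rw [hcomm, hFcomm, hFT]
  · simp only [LinearMap.comp_apply]
    rw [hT.apply_apply, ← hPapply, hFB, hFPF]

theorem two_step_invertible_ky_biinvariant_complex_general {n : Type*} [LieRing n] [LieAlgebra ℝ n]
    [FiniteDimensional ℝ n]
    (B : n →ₗ[ℝ] n →ₗ[ℝ] ℝ) (hB : IsInnerProduct B)
    (h2step : ∀ x y z : n, ⁅x, ⁅y, z⁆⁆ = 0)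
    (D : n → n → n) (hD : IsLeviCivita B D)
    (T : n →ₗ[ℝ] n) (hT : IsSkewSymmetric B T) (hTinv : Function.Bijective T)
    (hKY : IsKY B D T) :
    ∃ J : n →ₗ[ℝ] n, (∀ x : n, J (J x) = -x) ∧
      (∀ x y : n, J ⁅x, y⁆ = ⁅J x, y⁆) ∧ (∀ x y : n, ⁅J x, y⁆ = ⁅x, J y⁆) ∧
      (∀ x y : n, B (J x) (J y) = B x y) :=
  exists_biinvariant_complex_of_apply_lie hB hT hTinv.injective
    (hKY.lie_apply_comm hD hT hB h2step) (hKY.apply_lie hD hT hB h2step)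

/-- A 2-step nilpotent metric Lie algebra admitting an invertible
Killing-Yano tensor admits a bi-invariant orthogonal complex structure. -/
theorem two_step_invertible_ky_biinvariant_complex {n : Type*} [LieRing n] [LieAlgebra ℝ n]
    [FiniteDimensional ℝ n]
    (B : n →ₗ[ℝ] n →ₗ[ℝ] ℝ) (hB : IsInnerProduct B)
    (hnonab : ∃ x y : n, ⁅x, y⁆ ≠ 0)
    (h2step : ∀ x y z : n, ⁅x, ⁅y, z⁆⁆ = 0)
    (D : n → n → n) (hD : IsLeviCivita B D)
    (T : n →ₗ[ℝ] n) (hT : IsSkewSymmetric B T) (hTinv : Function.Bijective T)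
    (hKY : IsKY B D T) :
    ∃ J : n →ₗ[ℝ] n, (∀ x : n, J (J x) = -x) ∧
      (∀ x y : n, J ⁅x, y⁆ = ⁅J x, y⁆) ∧ (∀ x y : n, ⁅J x, y⁆ = ⁅x, J y⁆) ∧
      (∀ x y : n, B (J x) (J y) = B x y) :=
  two_step_invertible_ky_biinvariant_complex_general B hB h2step D hD T hT hTinv hKY
end

section
/- Let (𝔫, ⟨·,·⟩) be a 2-step nilpotent metric Lie algebra whose center z(𝔫) equals the commutator ideal [𝔫, 𝔫], let 𝔳 = z(𝔫)^⊥, and let J be a bi-invariant orthogonal complex structure on 𝔫 (J² = −id, J[x, y] = [Jx, y] for all x, y, and ⟨Jx, Jy⟩ = ⟨x, y⟩ for all x, y; such a J preserves both z(𝔫) and 𝔳). Then the endomorphism T of 𝔫 defined by T|_𝔳 = J|_𝔳 and T|_{z(𝔫)} = 3·J|_{z(𝔫)} is an invertible Killing-Yano tensor on (𝔫, ⟨·,·⟩), and T is not parallel. -/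
/-!
Split `𝔫 = 𝔳 ⊕ z(𝔫)` orthogonally. Since `T - J` takes values in the center and `J` is
bi-invariant, `[x, Ty] = J[x, y]`, and `T = 3J` on `[𝔫, 𝔫]`. Fed into the Koszul formula this gives
`⟨(∇ₓT)y, w⟩ = -(⟨J[x,y], w⟩ + ⟨J[y,w], x⟩ + ⟨J[w,x], y⟩)`, which is alternating in `x, y`: this is
the Killing-Yano equation. For `w = J[x, y]` the right-hand side is `-|[x, y]|²`, so `T` is not
parallel. The inverse of `T` is `-J` on `𝔳` and `-J/3` on `z(𝔫)`.
-/

namespace IsInnerProduct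

variable {g : Type*} [LieRing g] [LieAlgebra ℝ g] {B : g →ₗ[ℝ] g →ₗ[ℝ] ℝ}

theorem eq_zero_of_apply_self_eq_zero (hB : IsInnerProduct B) {x : g} (hx : B x x = 0) :
    x = 0 := by
  by_contra h
  exact (hB.posdef x h).ne' hx

theorem exists_mem_orthComp_add_eq [FiniteDimensional ℝ g] (hB : IsInnerProduct B)
    (p : Submodule ℝ g) (x : g) : ∃ a ∈ orthComp B p, ∃ b ∈ p, a + b = x := by
  have hcompl : IsCompl p (LinearMap.BilinForm.orthogonal B p) := by
    refine LinearMap.BilinForm.isCompl_orthogonal_of_restrict_nondegenerate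
      (fun x y h => by rw [hB.symm]; exact h) ⟨?_, ?_⟩ <;>
    · rintro ⟨y, hy⟩ h
      exact Subtype.ext (hB.eq_zero_of_apply_self_eq_zero (h ⟨y, hy⟩))
  obtain ⟨b, hb, a, ha, hab⟩ := Submodule.mem_sup.1 (hcompl.sup_eq_top ▸ Submodule.mem_top (x := x))
  exact ⟨a, fun q hq => hB.symm a q ▸ ha q hq, b, hb, by rw [add_comm, hab]⟩

end IsInnerProduct

section LeviCivita

variable {g : Type*} [LieRing g] [LieAlgebra ℝ g] {B : g →ₗ[ℝ] g →ₗ[ℝ] ℝ} {D : g → g → g}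

theorem isSkewSymmetric_of_apply_apply_eq_neg {J : g →ₗ[ℝ] g} (hJ2 : ∀ x, J (J x) = -x)
    (hJorth : ∀ x y, B (J x) (J y) = B x y) : IsSkewSymmetric B J := by
  intro x y
  have h := hJorth x (J y)
  rw [hJ2, map_neg] at h
  linarith

theorem IsLeviCivita.two_mul_apply_covDeriv (hD : IsLeviCivita B D) {T : g →ₗ[ℝ] g}
    (hT : IsSkewSymmetric B T) (x y w : g) :
    2 * B (D x (T y) - T (D x y)) w =
      B ⁅x, T y⁆ w - B ⁅T y, w⁆ x + B ⁅w, x⁆ (T y) +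
        (B ⁅x, y⁆ (T w) - B ⁅y, T w⁆ x + B ⁅T w, x⁆ y) := by
  rw [map_sub, LinearMap.sub_apply, hT, mul_sub, hD, mul_neg, hD]
  ring

-- The factor `3` makes the three coefficients equal, so that the result is a cyclic sum.
theorem IsLeviCivita.apply_covDeriv_eq_neg_cyclic (hD : IsLeviCivita B D) {S T : g →ₗ[ℝ] g}
    (hT : IsSkewSymmetric B T) (hlie : ∀ x y : g, ⁅x, T y⁆ = S ⁅x, y⁆)
    (hTlie : ∀ x y : g, T ⁅x, y⁆ = (3 : ℝ) • S ⁅x, y⁆) (x y w : g) :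
    B (D x (T y) - T (D x y)) w = -(B (S ⁅x, y⁆) w + B (S ⁅y, w⁆) x + B (S ⁅w, x⁆) y) := by
  have hlie' : ∀ x y, ⁅T x, y⁆ = S ⁅x, y⁆ := fun x y => by
    rw [← lie_skew, hlie, ← map_neg, lie_skew]
  have hskew : ∀ u v, B u (T v) = -B (T u) v := fun u v => by rw [hT]; ring
  have h := hD.two_mul_apply_covDeriv hT x y w
  rw [hlie, hlie', hskew ⁅w, x⁆, hskew ⁅x, y⁆, hlie, hlie', hTlie, hTlie] at h
  simp only [map_smul, LinearMap.smul_apply, smul_eq_mul] at h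
  linarith

theorem isKY_of_lie_apply_eq (hD : IsLeviCivita B D) {S T : g →ₗ[ℝ] g}
    (hT : IsSkewSymmetric B T) (hlie : ∀ x y : g, ⁅x, T y⁆ = S ⁅x, y⁆)
    (hTlie : ∀ x y : g, T ⁅x, y⁆ = (3 : ℝ) • S ⁅x, y⁆) : IsKY B D T := by
  intro x y w
  rw [hD.apply_covDeriv_eq_neg_cyclic hT hlie hTlie, hD.apply_covDeriv_eq_neg_cyclic hT hlie hTlie,
    ← lie_skew x y, ← lie_skew w y, ← lie_skew x w]
  simp only [map_neg, LinearMap.neg_apply, LinearMap.zero_apply, mul_zero, sub_zero]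
  ring

theorem not_isParallelT_of_lie_apply_eq (hB : IsInnerProduct B) (hD : IsLeviCivita B D)
    {S T : g →ₗ[ℝ] g} (hT : IsSkewSymmetric B T) (hlie : ∀ x y : g, ⁅x, T y⁆ = S ⁅x, y⁆)
    (hTlie : ∀ x y : g, T ⁅x, y⁆ = (3 : ℝ) • S ⁅x, y⁆) (hS : ∀ u, B (S u) (S u) = B u u)
    (hScenter : ∀ x y : g, S ⁅x, y⁆ ∈ LieAlgebra.center ℝ g)
    (hnonab : ∃ x y : g, ⁅x, y⁆ ≠ 0) : ¬ IsParallelT D T := by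
  intro hpar
  obtain ⟨x, y, hxy⟩ := hnonab
  have hcentral := (LieModule.mem_maxTrivSubmodule ℝ g g _).1 (hScenter x y)
  have hcentral' : ⁅S ⁅x, y⁆, x⁆ = 0 := by rw [← lie_skew, hcentral, neg_zero]
  have h := hD.apply_covDeriv_eq_neg_cyclic hT hlie hTlie x y (S ⁅x, y⁆)
  simp only [hpar x y, hcentral, hcentral', map_zero, LinearMap.zero_apply, hS] at h
  exact hxy (hB.eq_zero_of_apply_self_eq_zero (by linarith))

end LeviCivita

section TwoStep

variable {n : Type*} [LieRing n] [LieAlgebra ℝ n] {B : n →ₗ[ℝ] n →ₗ[ℝ] ℝ} {J T : n →ₗ[ℝ] n}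

theorem lie_apply_eq_apply_lie (hJbi : ∀ x y : n, J ⁅x, y⁆ = ⁅J x, y⁆) (x y : n) :
    ⁅x, J y⁆ = J ⁅x, y⁆ := by
  rw [← lie_skew, ← hJbi, ← map_neg, lie_skew]

theorem lie_mem_center_of_two_step (h2step : ∀ x y z : n, ⁅x, ⁅y, z⁆⁆ = 0) (x y : n) :
    ⁅x, y⁆ ∈ LieAlgebra.center ℝ n :=
  (LieModule.mem_maxTrivSubmodule ℝ n n _).2 fun z => h2step z x y

variable [FiniteDimensional ℝ n]

theorem sub_mem_center_of_eq_on_orthComp (hB : IsInnerProduct B)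
    (hJz : ∀ z ∈ LieAlgebra.center ℝ n, J z ∈ LieAlgebra.center ℝ n)
    (hTv : ∀ x ∈ orthComp B (LieAlgebra.center ℝ n).toSubmodule, T x = J x)
    (hTz : ∀ z ∈ LieAlgebra.center ℝ n, T z = (3 : ℝ) • J z) (y : n) :
    T y - J y ∈ LieAlgebra.center ℝ n := by
  obtain ⟨a, ha, b, hb, rfl⟩ := hB.exists_mem_orthComp_add_eq (LieAlgebra.center ℝ n).toSubmodule y
  have h : T (a + b) - J (a + b) = (2 : ℝ) • J b := by
    rw [map_add, map_add, hTv a ha, hTz b hb]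
    module
  rw [h]
  exact (LieAlgebra.center ℝ n).smul_mem _ (hJz b hb)

theorem lie_apply_eq_of_eq_on_orthComp (hB : IsInnerProduct B)
    (hJbi : ∀ x y : n, J ⁅x, y⁆ = ⁅J x, y⁆)
    (hJz : ∀ z ∈ LieAlgebra.center ℝ n, J z ∈ LieAlgebra.center ℝ n)
    (hTv : ∀ x ∈ orthComp B (LieAlgebra.center ℝ n).toSubmodule, T x = J x)
    (hTz : ∀ z ∈ LieAlgebra.center ℝ n, T z = (3 : ℝ) • J z) (x y : n) :
    ⁅x, T y⁆ = J ⁅x, y⁆ := by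
  have h := (LieModule.mem_maxTrivSubmodule ℝ n n _).1
    (sub_mem_center_of_eq_on_orthComp hB hJz hTv hTz y) x
  rw [lie_sub, sub_eq_zero, lie_apply_eq_apply_lie hJbi] at h
  exact h

theorem isSkewSymmetric_of_eq_on_orthComp (hB : IsInnerProduct B) (hJ : IsSkewSymmetric B J)
    (hJz : ∀ z ∈ LieAlgebra.center ℝ n, J z ∈ LieAlgebra.center ℝ n)
    (hJv : ∀ x ∈ orthComp B (LieAlgebra.center ℝ n).toSubmodule,
      J x ∈ orthComp B (LieAlgebra.center ℝ n).toSubmodule)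
    (hTv : ∀ x ∈ orthComp B (LieAlgebra.center ℝ n).toSubmodule, T x = J x)
    (hTz : ∀ z ∈ LieAlgebra.center ℝ n, T z = (3 : ℝ) • J z) : IsSkewSymmetric B T := by
  intro x y
  obtain ⟨a, ha, b, hb, rfl⟩ := hB.exists_mem_orthComp_add_eq (LieAlgebra.center ℝ n).toSubmodule x
  obtain ⟨c, hc, d, hd, rfl⟩ := hB.exists_mem_orthComp_add_eq (LieAlgebra.center ℝ n).toSubmodule y
  have hvz {u v : n} (hu : u ∈ orthComp B (LieAlgebra.center ℝ n).toSubmodule)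
      (hv : v ∈ LieAlgebra.center ℝ n) : B u v = 0 ∧ B v u = 0 :=
    ⟨hu v hv, hB.symm v u ▸ hu v hv⟩
  simp only [map_add, hTv a ha, hTz b hb, hTv c hc, hTz d hd, map_smul, LinearMap.add_apply,
    LinearMap.smul_apply, smul_eq_mul, hJ a c, hJ b d, (hvz (hJv a ha) hd).1, (hvz hc (hJz b hb)).2,
    (hvz ha (hJz d hd)).1, (hvz (hJv c hc) hb).2]
  ring

theorem surjective_of_eq_on_orthComp (hB : IsInnerProduct B) (hJ2 : ∀ x : n, J (J x) = -x)
    (hJz : ∀ z ∈ LieAlgebra.center ℝ n, J z ∈ LieAlgebra.center ℝ n)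
    (hJv : ∀ x ∈ orthComp B (LieAlgebra.center ℝ n).toSubmodule,
      J x ∈ orthComp B (LieAlgebra.center ℝ n).toSubmodule)
    (hTv : ∀ x ∈ orthComp B (LieAlgebra.center ℝ n).toSubmodule, T x = J x)
    (hTz : ∀ z ∈ LieAlgebra.center ℝ n, T z = (3 : ℝ) • J z) : Function.Surjective T := by
  intro y
  obtain ⟨a, ha, b, hb, rfl⟩ := hB.exists_mem_orthComp_add_eq (LieAlgebra.center ℝ n).toSubmodule y
  refine ⟨-J a - (3⁻¹ : ℝ) • J b, ?_⟩
  rw [map_sub, map_neg, map_smul, hTv _ (hJv a ha), hTz _ (hJz b hb), hJ2, hJ2]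
  module

end TwoStep

theorem two_step_biinvariant_complex_gives_ky_general {n : Type*} [LieRing n] [LieAlgebra ℝ n]
    [FiniteDimensional ℝ n]
    (B : n →ₗ[ℝ] n →ₗ[ℝ] ℝ) (hB : IsInnerProduct B)
    (hnonab : ∃ x y : n, ⁅x, y⁆ ≠ 0)
    (h2step : ∀ x y z : n, ⁅x, ⁅y, z⁆⁆ = 0)
    (D : n → n → n) (hD : IsLeviCivita B D)
    (J : n →ₗ[ℝ] n)
    (hJ2 : ∀ x : n, J (J x) = -x)
    (hJbi : ∀ x y : n, J ⁅x, y⁆ = ⁅J x, y⁆)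
    (hJorth : ∀ x y : n, B (J x) (J y) = B x y)
    (hJz : ∀ z ∈ LieAlgebra.center ℝ n, J z ∈ LieAlgebra.center ℝ n)
    (hJv : ∀ x ∈ orthComp B (LieAlgebra.center ℝ n).toSubmodule,
      J x ∈ orthComp B (LieAlgebra.center ℝ n).toSubmodule)
    (T : n →ₗ[ℝ] n)
    (hTv : ∀ x ∈ orthComp B (LieAlgebra.center ℝ n).toSubmodule, T x = J x)
    (hTz : ∀ z ∈ LieAlgebra.center ℝ n, T z = (3 : ℝ) • J z) :
    IsSkewSymmetric B T ∧ IsKY B D T ∧ Function.Bijective T ∧ ¬ IsParallelT D T := by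
  have hJ := isSkewSymmetric_of_apply_apply_eq_neg hJ2 hJorth
  have hT := isSkewSymmetric_of_eq_on_orthComp hB hJ hJz hJv hTv hTz
  have hlie := lie_apply_eq_of_eq_on_orthComp hB hJbi hJz hTv hTz
  have hTlie (x y : n) : T ⁅x, y⁆ = (3 : ℝ) • J ⁅x, y⁆ :=
    hTz _ (lie_mem_center_of_two_step h2step x y)
  have hJcenter (x y : n) : J ⁅x, y⁆ ∈ LieAlgebra.center ℝ n :=
    hJz _ (lie_mem_center_of_two_step h2step x y)
  have hsurj := surjective_of_eq_on_orthComp hB hJ2 hJz hJv hTv hTz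
  exact ⟨hT, isKY_of_lie_apply_eq hD hT hlie hTlie,
    ⟨LinearMap.injective_iff_surjective.2 hsurj, hsurj⟩,
    not_isParallelT_of_lie_apply_eq hB hD hT hlie hTlie (fun u => hJorth u u) hJcenter hnonab⟩

/-- On a 2-step nilpotent metric Lie algebra with `z(𝔫) = [𝔫, 𝔫]`, given a
bi-invariant orthogonal complex structure `J` (which preserves `z(𝔫)` and `𝔳 = z(𝔫)^⊥`),
the endomorphism `T` with `T|_𝔳 = J|_𝔳` and `T|_{z(𝔫)} = 3J|_{z(𝔫)}` is an invertible
Killing-Yano tensor which is not parallel. -/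
theorem two_step_biinvariant_complex_gives_ky {n : Type*} [LieRing n] [LieAlgebra ℝ n]
    [FiniteDimensional ℝ n]
    (B : n →ₗ[ℝ] n →ₗ[ℝ] ℝ) (hB : IsInnerProduct B)
    (hnonab : ∃ x y : n, ⁅x, y⁆ ≠ 0)
    (h2step : ∀ x y z : n, ⁅x, ⁅y, z⁆⁆ = 0)
    (hzc : (LieAlgebra.center ℝ n).toSubmodule
      = Submodule.span ℝ {w : n | ∃ x y : n, w = ⁅x, y⁆})
    (D : n → n → n) (hD : IsLeviCivita B D)
    (J : n →ₗ[ℝ] n)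
    (hJ2 : ∀ x : n, J (J x) = -x)
    (hJbi : ∀ x y : n, J ⁅x, y⁆ = ⁅J x, y⁆)
    (hJorth : ∀ x y : n, B (J x) (J y) = B x y)
    (hJz : ∀ z ∈ LieAlgebra.center ℝ n, J z ∈ LieAlgebra.center ℝ n)
    (hJv : ∀ x ∈ orthComp B (LieAlgebra.center ℝ n).toSubmodule,
      J x ∈ orthComp B (LieAlgebra.center ℝ n).toSubmodule)
    (T : n →ₗ[ℝ] n)
    (hTv : ∀ x ∈ orthComp B (LieAlgebra.center ℝ n).toSubmodule, T x = J x)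
    (hTz : ∀ z ∈ LieAlgebra.center ℝ n, T z = (3 : ℝ) • J z) :
    IsSkewSymmetric B T ∧ IsKY B D T ∧ Function.Bijective T ∧ ¬ IsParallelT D T :=
  two_step_biinvariant_complex_gives_ky_general B hB hnonab h2step D hD J hJ2 hJbi hJorth hJz hJv T
    hTv hTz
end
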